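/- arXiv:1804.03823 — 2 statements merged into one kernel-verified Lean document; each statement's English description precedes it below -/
import Mathlib

section
/- Let I be a two-sender unicast index coding problem (TUICP: each message is demanded by exactly one receiver) with interaction digraph of type H_61; write r_A = mrk_A for A ∈ {1, 2, 12} and assume r_2 ≥ r_{12} ≥ r_1. Assume: (a) there exist completions F^{(1)} ≈ F_x^{(1)}, F^{(2)} ≈ F_x^{(2)} of ranks r_1, r_2 that realize F̃_x as a joint extension of the type of the joint-extension theorem; (b) there is a completion F^{(12)} ≈ F_x^{(12)} of rank r_{12} whose first r_{12} rows span its row space, P^{(12)} is the matrix with the last rows of F^{(12)} equal to P^{(12)} F^{(12)}_{[r_{12}]}, and P^{(2)} is the matrix with the last rows of F^{(2)} equal to P^{(2)} F^{(2)}_{[r_2]}; (c) with F̂^{(1)} := F^{(1)}_{[r_1]} with r_{12} − r_1 zero rows appended, the stacked matrix [F̂^{(1)}; P^{(12)} F̂^{(1)}] vanishes at every entry at which the corresponding receiver with demand in P_{12} does not have the corresponding P_1-message in its side information; (d) with F̂^{(12)} := F^{(12)}_{[r_{12}]} with r_2 − r_{12} zero rows appended, the stacked matrix [F̂^{(12)};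 P^{(2)} F̂^{(12)}] vanishes at every entry at which the corresponding receiver with demand in P_2 does not have the corresponding P_{12}-message in its side information; (e) no receiver with demand in P_{12} has side information in P_2 (the interaction I_{12} → I_2 does not exist). Then l*_q(I) = r_2 + r_{12} = mrk_2 + mrk_{12}. -/
open scoped Classical

/-- `A ≈ F_x`: the matrix `A` completes the fitting matrix of the SGICP with demand map `f`
and side-information sets `χ`, i.e. `A` equals `1` at every demand entry and `0` at every
entry which is neither a demand entry nor a side-information entry. -/
def Completes {K : Type*} [Field K] {R M : Type*} (f : R → M) (χ : R → Set M)
    (A : Matrix R M K) : Prop :=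
  (∀ i, A i (f i) = 1) ∧ ∀ i j, j ≠ f i → j ∉ χ i → A i j = 0

/-- `mrk_q(F_x)`: the minrank over `K` of the SGICP with demand map `f` and side
information `χ` — the minimum rank of a matrix completing its fitting matrix. -/
noncomputable def minrk (K : Type*) [Field K] {R M : Type*} [Fintype M]
    (f : R → M) (χ : R → Set M) : ℕ :=
  sInf {r | ∃ A : Matrix R M K, Completes f χ A ∧ A.rank = r}

/-- `F̂`: the matrix formed by the first `min r r'` rows of `F` (an `n' × m'` matrix of
rank `r' ≤ n'`), padded with zero rows at the bottom so as to have exactly `r` rows.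
When `r' ≥ r` this is `F_{[r]}`; otherwise it is `F_{[r']}` with `r - r'` zero rows appended. -/
def padFirst {K : Type*} [Zero K] {n' m' : ℕ} (r r' : ℕ) (h : r' ≤ n')
    (F : Matrix (Fin n') (Fin m') K) : Matrix (Fin r) (Fin m') K :=
  Matrix.of fun a c => if hh : (a : ℕ) < r' then F ⟨a, lt_of_lt_of_le hh h⟩ c else 0

/-- The stacked matrix `[F̂ ; P·F̂]`: its first `r` rows are those of `F̂` and its remaining
rows are the corresponding rows of `P · F̂`. -/
noncomputable def stacked {K : Type*} [Field K] {n r m' : ℕ}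
    (Pm : Matrix (Fin n) (Fin r) K) (Fh : Matrix (Fin r) (Fin m') K) :
    Matrix (Fin n) (Fin m') K :=
  Matrix.of fun k c => if h : (k : ℕ) < r then Fh ⟨k, h⟩ c else ∑ t, Pm k t * Fh t c

/-- A two-sender groupcast index coding problem (TGICP) with `m` messages and `n` receivers.
Sender `j` holds the messages indexed by `Mj`, receiver `i` demands message `f i` and has
side information `χ i`; every message is demanded by at least one receiver. -/
structure TGICP (m n : ℕ) where
  /-- indices of the messages available at sender 1 -/
  M1 : Set (Fin m)
  /-- indices of the messages available at sender 2 -/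
  M2 : Set (Fin m)
  cover : M1 ∪ M2 = Set.univ
  /-- demand map -/
  f : Fin n → Fin m
  /-- side-information sets -/
  χ : Fin n → Set (Fin m)
  not_mem : ∀ i, f i ∉ χ i
  surj : ∀ j, ∃ i, f i = j

namespace TGICP

variable {m n : ℕ}

/-- `(G1, G2)` is a valid scalar linear two-sender index code over `K`: each receiver can
decode its demanded message from the two transmitted codewords together with its side
information. -/
def IsCode (I : TGICP m n) (K : Type*) [Field K] {l1 l2 : ℕ}
    (G1 : Matrix (Fin l1) ↥I.M1 K) (G2 : Matrix (Fin l2) ↥I.M2 K) : Prop :=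
  ∀ i : Fin n, ∃ D : (Fin l1 → K) → (Fin l2 → K) → (↥(I.χ i) → K) → K,
    ∀ x : Fin m → K,
      D (G1.mulVec fun j => x j.1) (G2.mulVec fun j => x j.1) (fun j => x j.1) = x (I.f i)

/-- `l*_q(I)`: the optimal (minimum) aggregate length of a scalar linear two-sender index
code for `I` over `K`. -/
noncomputable def optLen (I : TGICP m n) (K : Type*) [Field K] : ℕ :=
  sInf {L | ∃ (l1 l2 : ℕ) (G1 : Matrix (Fin l1) ↥I.M1 K) (G2 : Matrix (Fin l2) ↥I.M2 K),
    I.IsCode K G1 G2 ∧ L = l1 + l2}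

/-- The minrank over `K` of the single-sender sub-problem of `I` with message set `P`:
its receivers are those demanding a message in `P`, with side information restricted
to `P`. -/
noncomputable def mrk (I : TGICP m n) (K : Type*) [Field K] (P : Set (Fin m)) : ℕ :=
  minrk K (fun i : {i : Fin n // I.f i ∈ P} => (⟨I.f i.1, i.2⟩ : ↥P))
    (fun i => {j : ↥P | j.1 ∈ I.χ i.1})

end TGICP

/-- `F ≈ F_x^(A)`: the matrix `F`, with rows and columns enumerated via the bijections
`eR` (receivers demanding a message in `P`) and `eM` (messages in `P`), completes the
fitting matrix of the sub-problem of `I` with message set `P`. -/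
def SubCompletes {K : Type*} [Field K] {m n nA mA : ℕ} (I : TGICP m n) (P : Set (Fin m))
    (eR : Fin nA ≃ {i : Fin n // I.f i ∈ P}) (eM : Fin mA ≃ ↥P)
    (F : Matrix (Fin nA) (Fin mA) K) : Prop :=
  ∀ k c,
    ((eM c).1 = I.f (eR k).1 → F k c = 1) ∧
    ((eM c).1 ≠ I.f (eR k).1 → (eM c).1 ∉ I.χ (eR k).1 → F k c = 0)


section AuxHelpers

open scoped Classical

variable {K : Type*} [Field K]

/-- Sum over a subtype as a sum over the ambient fintype with a `dite`. -/
lemma sum_subtype_dite {α : Type*} [Fintype α] (S : Set α) (g : ↥S → K) :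
    ∑ j : ↥S, g j = ∑ j : α, if h : j ∈ S then g ⟨j, h⟩ else 0 := by
  classical
  have h1 : ∑ j ∈ Finset.univ.filter (fun j => j ∈ S), (if h : j ∈ S then g ⟨j, h⟩ else 0)
      = ∑ j : α, (if h : j ∈ S then g ⟨j, h⟩ else 0) := by
    apply Finset.sum_subset (Finset.subset_univ _)
    intro x _ hx
    simp only [Finset.mem_filter, Finset.mem_univ, true_and] at hx
    exact dif_neg hx
  rw [← h1, Finset.sum_subtype (p := fun j => j ∈ S) (Finset.univ.filter (fun j => j ∈ S))
    (by simp) (fun j => if h : j ∈ S then g ⟨j, h⟩ else 0)]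
  refine Finset.sum_congr rfl (fun x _ => ?_)
  rw [dif_pos x.2]

/-- Coefficient vector picking row `k0` if `k0 < r`, else the `Pm`-combination of the
first `r` rows. -/
def coefGen {N r L : ℕ} (_ : r ≤ L) (Pm : Matrix (Fin N) (Fin r) K) (k0 : Fin N) :
    Fin L → K := fun t =>
  if (k0 : ℕ) < r then (if (t : ℕ) = (k0 : ℕ) then 1 else 0)
  else if ht : (t : ℕ) < r then Pm k0 ⟨t, ht⟩ else 0

lemma sum_coefGen {N r L : ℕ} (hrL : r ≤ L) (Pm : Matrix (Fin N) (Fin r) K) (k0 : Fin N)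
    (C : Fin L → K) :
    ∑ t, coefGen hrL Pm k0 t * C t =
      if h : (k0 : ℕ) < r then C ⟨k0.1, lt_of_lt_of_le h hrL⟩
      else ∑ t : Fin r, Pm k0 t * C (Fin.castLE hrL t) := by
  by_cases h : (k0 : ℕ) < r
  · rw [dif_pos h]
    rw [Finset.sum_eq_single (⟨k0.1, lt_of_lt_of_le h hrL⟩ : Fin L)]
    · simp [coefGen, h]
    · intro t _ ht
      have : (t : ℕ) ≠ (k0 : ℕ) := by
        intro hc; exact ht (Fin.ext hc)
      simp [coefGen, h, this]
    · intro ht; exact absurd (Finset.mem_univ _) ht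
  · rw [dif_neg h]
    have key : ∀ t : Fin r, coefGen hrL Pm k0 (Fin.castLE hrL t) * C (Fin.castLE hrL t)
        = Pm k0 t * C (Fin.castLE hrL t) := by
      intro t
      simp [coefGen, h, t.2, Fin.castLE]
    symm
    calc ∑ t : Fin r, Pm k0 t * C (Fin.castLE hrL t)
        = ∑ t ∈ Finset.univ.map (Fin.castLEEmb hrL), coefGen hrL Pm k0 t * C t := by
          rw [Finset.sum_map]
          exact Finset.sum_congr rfl (fun t _ => (key t).symm)
      _ = ∑ t : Fin L, coefGen hrL Pm k0 t * C t := by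
          apply Finset.sum_subset (Finset.subset_univ _)
          intro x _ hx
          have hxr : ¬ (x : ℕ) < r := by
            intro hc
            exact hx (Finset.mem_map.2 ⟨⟨x.1, hc⟩, Finset.mem_univ _, Fin.ext rfl⟩)
          simp [coefGen, h, hxr]

/-- Extended generator entry: `G1` viewed as an `l1 × m` matrix, zero outside `M1`. -/
noncomputable def ext1 {m n l1 : ℕ} (I : TGICP m n) (G1 : Matrix (Fin l1) ↥I.M1 K)
    (k : Fin l1) (j : Fin m) : K :=
  if hj : j ∈ I.M1 then G1 k ⟨j, hj⟩ else 0

/-- Extended generator entry: `G2` viewed as an `l2 × m` matrix, zero outside `M2`. -/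
noncomputable def ext2 {m n l2 : ℕ} (I : TGICP m n) (G2 : Matrix (Fin l2) ↥I.M2 K)
    (k : Fin l2) (j : Fin m) : K :=
  if hj : j ∈ I.M2 then G2 k ⟨j, hj⟩ else 0

lemma code_of_rows {m n l1 l2 : ℕ} (I : TGICP m n)
    (G1 : Matrix (Fin l1) ↥I.M1 K) (G2 : Matrix (Fin l2) ↥I.M2 K)
    (h : ∀ i : Fin n, ∃ (a : Fin l1 → K) (b : Fin l2 → K),
      ∀ j : Fin m, j ∉ I.χ i →
        (∑ k, a k * ext1 I G1 k j) + (∑ k, b k * ext2 I G2 k j)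
          = (if j = I.f i then 1 else 0)) :
    I.IsCode K G1 G2 := by
  intro i
  obtain ⟨a, b, hab⟩ := h i
  set w : Fin m → K := fun j =>
    (∑ k, a k * ext1 I G1 k j) + (∑ k, b k * ext2 I G2 k j)
      - (if j = I.f i then 1 else 0) with hw
  have hwj : ∀ j, w j = (∑ k, a k * ext1 I G1 k j) + (∑ k, b k * ext2 I G2 k j)
      - (if j = I.f i then 1 else 0) := fun j => rfl
  refine ⟨fun y1 y2 s => (∑ k, a k * y1 k) + (∑ k, b k * y2 k)
    - ∑ j : ↥(I.χ i), w j.1 * s j, ?_⟩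
  intro x
  have h1 : ∑ k, a k * (G1.mulVec fun j => x j.1) k
      = ∑ j : Fin m, (∑ k, a k * ext1 I G1 k j) * x j := by
    simp only [Matrix.mulVec, dotProduct, Finset.mul_sum]
    rw [Finset.sum_comm]
    have step : ∀ j : ↥I.M1, (fun j : ↥I.M1 => ∑ k, a k * (G1 k j * x j.1)) j
        = (fun j : ↥I.M1 => (∑ k, a k * G1 k j) * x j.1) j := by
      intro j
      simp only [Finset.sum_mul, mul_assoc]
    rw [Finset.sum_congr rfl (fun j _ => step j),
      sum_subtype_dite I.M1 (fun j : ↥I.M1 => (∑ k, a k * G1 k j) * x j.1)]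
    apply Finset.sum_congr rfl
    intro j _
    by_cases hj : j ∈ I.M1
    · rw [dif_pos hj]
      congr 1
      exact Finset.sum_congr rfl (fun k _ => by rw [ext1, dif_pos hj])
    · rw [dif_neg hj]
      have hz : ∀ k, a k * ext1 I G1 k j = 0 := fun k => by rw [ext1, dif_neg hj, mul_zero]
      rw [Finset.sum_congr rfl (fun k _ => hz k), Finset.sum_const_zero, zero_mul]
  have h2 : ∑ k, b k * (G2.mulVec fun j => x j.1) k
      = ∑ j : Fin m, (∑ k, b k * ext2 I G2 k j) * x j := by
    simp only [Matrix.mulVec, dotProduct, Finset.mul_sum]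
    rw [Finset.sum_comm]
    have step : ∀ j : ↥I.M2, (fun j : ↥I.M2 => ∑ k, b k * (G2 k j * x j.1)) j
        = (fun j : ↥I.M2 => (∑ k, b k * G2 k j) * x j.1) j := by
      intro j
      simp only [Finset.sum_mul, mul_assoc]
    rw [Finset.sum_congr rfl (fun j _ => step j),
      sum_subtype_dite I.M2 (fun j : ↥I.M2 => (∑ k, b k * G2 k j) * x j.1)]
    apply Finset.sum_congr rfl
    intro j _
    by_cases hj : j ∈ I.M2
    · rw [dif_pos hj]
      congr 1
      exact Finset.sum_congr rfl (fun k _ => by rw [ext2, dif_pos hj])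
    · rw [dif_neg hj]
      have hz : ∀ k, b k * ext2 I G2 k j = 0 := fun k => by rw [ext2, dif_neg hj, mul_zero]
      rw [Finset.sum_congr rfl (fun k _ => hz k), Finset.sum_const_zero, zero_mul]
  have h3 : ∑ j : ↥(I.χ i), w j.1 * x j.1 = ∑ j : Fin m, w j * x j := by
    rw [sum_subtype_dite (I.χ i) (fun j : ↥(I.χ i) => w j.1 * x j.1)]
    apply Finset.sum_congr rfl
    intro j _
    by_cases hj : j ∈ I.χ i
    · rw [dif_pos hj]
    · rw [dif_neg hj]
      have hz : w j = 0 := by rw [hwj j, hab j hj, sub_self]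
      rw [hz, zero_mul]
  have goal : (∑ k, a k * (G1.mulVec fun j => x j.1) k)
      + (∑ k, b k * (G2.mulVec fun j => x j.1) k)
      - (∑ j : ↥(I.χ i), w j.1 * x j.1) = x (I.f i) := by
    rw [h1, h2, h3]
    have h4 : ∀ j : Fin m,
        (∑ k, a k * ext1 I G1 k j) * x j + (∑ k, b k * ext2 I G2 k j) * x j - w j * x j
        = (if j = I.f i then 1 else 0) * x j := by
      intro j; rw [hwj j]; ring
    calc (∑ j : Fin m, (∑ k, a k * ext1 I G1 k j) * x j)
          + (∑ j : Fin m, (∑ k, b k * ext2 I G2 k j) * x j) - ∑ j : Fin m, w j * x j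
        = ∑ j : Fin m, ((∑ k, a k * ext1 I G1 k j) * x j
            + (∑ k, b k * ext2 I G2 k j) * x j - w j * x j) := by
          rw [← Finset.sum_add_distrib, ← Finset.sum_sub_distrib]
      _ = ∑ j : Fin m, (if j = I.f i then 1 else 0) * x j :=
          Finset.sum_congr rfl (fun j _ => h4 j)
      _ = x (I.f i) := by
          simp [ite_mul]
  exact goal

lemma factor_through {V W : Type*} [AddCommGroup V] [Module K V]
    [AddCommGroup W] [Module K W]
    (ψ : V →ₗ[K] W) (φ : V →ₗ[K] K) (h : ∀ x, ψ x = 0 → φ x = 0) :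
    ∃ g : W →ₗ[K] K, ∀ x, φ x = g (ψ x) := by
  have hle : LinearMap.ker ψ ≤ LinearMap.ker φ := by
    intro x hx
    exact LinearMap.mem_ker.2 (h x (LinearMap.mem_ker.1 hx))
  set f1 : (V ⧸ LinearMap.ker ψ) →ₗ[K] K := (LinearMap.ker ψ).liftQ φ hle with hf1
  set e := ψ.quotKerEquivRange with he
  set f0 : ↥(LinearMap.range ψ) →ₗ[K] K := f1.comp (e.symm : _ →ₗ[K] _) with hf0
  obtain ⟨g, hg⟩ := f0.exists_extend
  refine ⟨g, fun x => ?_⟩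
  have hmem : ψ x ∈ LinearMap.range ψ := ⟨x, rfl⟩
  have h1 : g (ψ x) = f0 ⟨ψ x, hmem⟩ := by
    have := congrArg (fun t => t ⟨ψ x, hmem⟩) hg
    simpa using this
  have h2 : e.symm ⟨ψ x, hmem⟩ = Submodule.Quotient.mk x := by
    rw [he]
    exact ψ.quotKerEquivRange_symm_apply_image x hmem
  rw [h1, hf0]
  simp only [LinearMap.comp_apply, LinearEquiv.coe_coe]
  rw [h2, hf1]
  simp [Submodule.liftQ_apply]

lemma functional_pi {ι : Type*} [Fintype ι] [DecidableEq ι] (g : (ι → K) →ₗ[K] K) (y : ι → K) :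
    g y = ∑ r, y r * g (Pi.single r 1) := by
  have hy : y = ∑ r, y r • (Pi.single r (1 : K) : ι → K) := by
    funext j
    rw [Finset.sum_apply]
    simp [Pi.single_apply, eq_comm]
  conv_lhs => rw [hy]
  rw [map_sum]
  exact Finset.sum_congr rfl (fun r _ => by rw [map_smul, smul_eq_mul])

lemma decode_rows {m n l1 l2 : ℕ} (I : TGICP m n)
    (G1 : Matrix (Fin l1) ↥I.M1 K) (G2 : Matrix (Fin l2) ↥I.M2 K)
    (hcode : I.IsCode K G1 G2) (i : Fin n) :
    ∃ (a : Fin l1 → K) (b : Fin l2 → K) (u : Fin m → K),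
      (∀ j, j ∉ I.χ i ∪ (I.M1 \ I.M2) → u j = 0) ∧
      ∀ j : Fin m, (if j = I.f i then (1:K) else 0)
        = (∑ k, a k * ext1 I G1 k j) + (∑ k, b k * ext2 I G2 k j) + u j := by
  set S : Set (Fin m) := I.χ i ∪ (I.M1 \ I.M2) with hS
  set T : Matrix (Sum (Fin l1) (Sum (Fin l2) (Fin m))) (Fin m) K :=
    Matrix.of (Sum.elim (fun k => ext1 I G1 k)
      (Sum.elim (fun k => ext2 I G2 k)
        (fun j0 j => if j0 ∈ S then (if j = j0 then (1:K) else 0) else 0))) with hT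
  have mulVec_ext1 : ∀ (x : Fin m → K) k,
      (G1.mulVec fun j : ↥I.M1 => x j.1) k = ∑ j, ext1 I G1 k j * x j := by
    intro x k
    simp only [Matrix.mulVec, dotProduct]
    rw [sum_subtype_dite I.M1 (fun j : ↥I.M1 => G1 k j * x j.1)]
    apply Finset.sum_congr rfl
    intro j _
    by_cases hj : j ∈ I.M1
    · rw [dif_pos hj, ext1, dif_pos hj]
    · rw [dif_neg hj, ext1, dif_neg hj, zero_mul]
  have mulVec_ext2 : ∀ (x : Fin m → K) k,
      (G2.mulVec fun j : ↥I.M2 => x j.1) k = ∑ j, ext2 I G2 k j * x j := by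
    intro x k
    simp only [Matrix.mulVec, dotProduct]
    rw [sum_subtype_dite I.M2 (fun j : ↥I.M2 => G2 k j * x j.1)]
    apply Finset.sum_congr rfl
    intro j _
    by_cases hj : j ∈ I.M2
    · rw [dif_pos hj, ext2, dif_pos hj]
    · rw [dif_neg hj, ext2, dif_neg hj, zero_mul]
  have hker : ∀ x : Fin m → K, T.mulVecLin x = 0 → x (I.f i) = 0 := by
    intro x hx
    obtain ⟨D, hD⟩ := hcode i
    have hrow : ∀ row, ∑ j, T row j * x j = 0 := by
      intro row
      have := congrFun hx row
      simpa [Matrix.mulVecLin_apply, Matrix.mulVec, dotProduct] using this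
    have hy1 : (G1.mulVec fun j : ↥I.M1 => x j.1) = 0 := by
      funext k
      rw [mulVec_ext1 x k]
      simpa [hT] using hrow (Sum.inl k)
    have hy2 : (G2.mulVec fun j : ↥I.M2 => x j.1) = 0 := by
      funext k
      rw [mulVec_ext2 x k]
      simpa [hT] using hrow (Sum.inr (Sum.inl k))
    have hside : ∀ j0 ∈ S, x j0 = 0 := by
      intro j0 hj0
      have := hrow (Sum.inr (Sum.inr j0))
      simpa [hT, hj0, ite_mul, Finset.sum_ite_eq'] using this
    have e1 := hD x
    have e0 := hD 0
    have z1 : (G1.mulVec fun j : ↥I.M1 => (0 : Fin m → K) j.1) = 0 := by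
      have : (fun j : ↥I.M1 => (0 : Fin m → K) j.1) = (0 : ↥I.M1 → K) := rfl
      rw [this, Matrix.mulVec_zero]
    have z2 : (G2.mulVec fun j : ↥I.M2 => (0 : Fin m → K) j.1) = 0 := by
      have : (fun j : ↥I.M2 => (0 : Fin m → K) j.1) = (0 : ↥I.M2 → K) := rfl
      rw [this, Matrix.mulVec_zero]
    have hsχ : (fun j : ↥(I.χ i) => x j.1) = (fun j : ↥(I.χ i) => (0 : Fin m → K) j.1) := by
      funext j
      exact hside j.1 (Or.inl j.2)
    rw [hy1, hy2, hsχ, ← z1, ← z2] at e1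
    rw [e1] at e0
    simpa using e0.symm ▸ e0
  obtain ⟨g, hg⟩ := factor_through T.mulVecLin (LinearMap.proj (I.f i)) hker
  refine ⟨fun k => g (Pi.single (Sum.inl k) 1), fun k => g (Pi.single (Sum.inr (Sum.inl k)) 1),
    fun j => if j ∈ S then g (Pi.single (Sum.inr (Sum.inr j)) 1) else 0, ?_, ?_⟩
  · intro j hj
    exact if_neg hj
  · intro j
    have hx := hg (Pi.single j 1)
    have hL : (LinearMap.proj (I.f i) : ((Fin m → K) →ₗ[K] K)) (Pi.single j 1)
        = (if j = I.f i then (1:K) else 0) := by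
      simp [LinearMap.proj_apply, Pi.single_apply, eq_comm]
    have hR : ∀ row, (T.mulVecLin (Pi.single j 1)) row = T row j := by
      intro row
      simp [Matrix.mulVecLin_apply, Matrix.mulVec, dotProduct, Pi.single_apply,
        mul_ite, mul_one, mul_zero, Finset.sum_ite_eq']
    have hlast : ∑ j0 : Fin m, T (Sum.inr (Sum.inr j0)) j * g (Pi.single (Sum.inr (Sum.inr j0)) 1)
        = (if j ∈ S then g (Pi.single (Sum.inr (Sum.inr j)) 1) else 0) := by
      rw [Finset.sum_eq_single j]
      · by_cases hjS : j ∈ S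
        · simp [hT, hjS]
        · simp [hT, hjS]
      · intro j0 _ hne
        by_cases h0 : j0 ∈ S
        · have : j ≠ j0 := fun hc => hne hc.symm
          simp [hT, h0, this]
        · simp [hT, h0]
      · intro hj; exact absurd (Finset.mem_univ _) hj
    calc (if j = I.f i then (1:K) else 0)
        = (LinearMap.proj (I.f i) : ((Fin m → K) →ₗ[K] K)) (Pi.single j 1) := hL.symm
      _ = g (T.mulVecLin (Pi.single j 1)) := hx
      _ = ∑ row, (T.mulVecLin (Pi.single j 1)) row * g (Pi.single row 1) := functional_pi g _
      _ = ∑ row, T row j * g (Pi.single row 1) :=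
          Finset.sum_congr rfl (fun row _ => by rw [hR row])
      _ = (∑ k, T (Sum.inl k) j * g (Pi.single (Sum.inl k) 1))
          + ((∑ k, T (Sum.inr (Sum.inl k)) j * g (Pi.single (Sum.inr (Sum.inl k)) 1))
            + (∑ j0 : Fin m, T (Sum.inr (Sum.inr j0)) j * g (Pi.single (Sum.inr (Sum.inr j0)) 1))) := by
          rw [Fintype.sum_sum_type, Fintype.sum_sum_type]
      _ = (∑ k, g (Pi.single (Sum.inl k) 1) * ext1 I G1 k j)
          + ((∑ k, g (Pi.single (Sum.inr (Sum.inl k)) 1) * ext2 I G2 k j)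
            + (if j ∈ S then g (Pi.single (Sum.inr (Sum.inr j)) 1) else 0)) := by
          rw [hlast]
          congr 1
          · exact Finset.sum_congr rfl (fun k _ => by simp [hT, mul_comm])
          congr 1
          exact Finset.sum_congr rfl (fun k _ => by simp [hT, mul_comm])
      _ = (∑ k, (fun k => g (Pi.single (Sum.inl k) 1)) k * ext1 I G1 k j)
          + (∑ k, (fun k => g (Pi.single (Sum.inr (Sum.inl k)) 1)) k * ext2 I G2 k j)
          + (fun j => if j ∈ S then g (Pi.single (Sum.inr (Sum.inr j)) 1) else 0) j := by
          ring

lemma rank_blocks {R2c R12c C2c C12c : Type*} [Fintype R2c] [Fintype R12c]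
    [Fintype C2c] [Fintype C12c] [DecidableEq R2c] [DecidableEq R12c]
    (B : Matrix R2c C2c K) (B' : Matrix R2c C12c K) (D : Matrix R12c C12c K) :
    B.rank + D.rank ≤ (Matrix.fromBlocks B B' 0 D).rank := by
  classical
  set M := Matrix.fromBlocks B B' 0 D with hM
  set S : Submodule K ((R2c ⊕ R12c) → K) := LinearMap.range M.mulVecLin with hSdef
  set π : ((R2c ⊕ R12c) → K) →ₗ[K] (R12c → K) := LinearMap.funLeft K K Sum.inr with hπ
  set φ : ↥S →ₗ[K] (R12c → K) := π.comp S.subtype with hφ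
  have hrn : Module.finrank K (LinearMap.range φ) + Module.finrank K (LinearMap.ker φ)
      = Module.finrank K ↥S := LinearMap.finrank_range_add_finrank_ker φ
  -- range φ has dimension D.rank
  have hcomp : π ∘ₗ M.mulVecLin = (D.mulVecLin).comp (LinearMap.funLeft K K Sum.inr) := by
    apply LinearMap.ext
    intro x
    funext r
    simp [Matrix.mulVecLin_apply, Matrix.mulVec, dotProduct, hM, hπ,
      Fintype.sum_sum_type, LinearMap.funLeft_apply, Matrix.fromBlocks_apply₂₁,
      Matrix.fromBlocks_apply₂₂]
  have hrange : LinearMap.range φ = LinearMap.range D.mulVecLin := by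
    rw [hφ, LinearMap.range_comp, Submodule.range_subtype, hSdef,
      ← LinearMap.range_comp, hcomp, LinearMap.range_comp,
      LinearMap.range_eq_top.2 (LinearMap.funLeft_surjective_of_injective K K _
        Sum.inr_injective), Submodule.map_top]
  have hrange' : Module.finrank K (LinearMap.range φ) = D.rank := by
    rw [hrange]; rfl
  -- ker φ has dimension ≥ B.rank
  let ι : (R2c → K) →ₗ[K] ((R2c ⊕ R12c) → K) :=
    { toFun := fun y => Sum.elim y 0
      map_add' := by intro y z; funext rw; cases rw <;> simp
      map_smul' := by intro c y; funext rw; cases rw <;> simp }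
  have hinj : Function.Injective ι := by
    intro y z h
    funext r
    exact congrFun h (Sum.inl r)
  have hsub : Submodule.map ι (LinearMap.range B.mulVecLin) ≤ S ⊓ LinearMap.ker π := by
    rintro _ ⟨_, ⟨y, rfl⟩, rfl⟩
    rw [Submodule.mem_inf]
    constructor
    · refine ⟨Sum.elim y 0, ?_⟩
      funext r
      cases r with
      | inl r =>
        simp [Matrix.mulVecLin_apply, Matrix.mulVec, dotProduct, hM,
          Fintype.sum_sum_type, ι]
      | inr r =>
        simp [Matrix.mulVecLin_apply, Matrix.mulVec, dotProduct, hM,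
          Fintype.sum_sum_type, ι]
    · rw [LinearMap.mem_ker, hπ]
      funext r
      simp [LinearMap.funLeft_apply, ι]
  have hkerφ : Module.finrank K (LinearMap.ker φ)
      = Module.finrank K ↥(S ⊓ LinearMap.ker π) := by
    have h1 : LinearMap.ker φ = Submodule.comap S.subtype (LinearMap.ker π) := by
      rw [hφ, LinearMap.ker_comp]
    have h2 : Submodule.map S.subtype (Submodule.comap S.subtype (LinearMap.ker π))
        = S ⊓ LinearMap.ker π := Submodule.map_comap_subtype _ _
    rw [h1, ← h2]
    exact (LinearEquiv.finrank_eq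
      (Submodule.equivMapOfInjective S.subtype (Submodule.injective_subtype S) _))
  have hklower : B.rank ≤ Module.finrank K (LinearMap.ker φ) := by
    rw [hkerφ]
    have h3 : Module.finrank K ↥(Submodule.map ι (LinearMap.range B.mulVecLin))
        = B.rank := by
      rw [← LinearEquiv.finrank_eq (Submodule.equivMapOfInjective ι hinj
        (LinearMap.range B.mulVecLin))]
      rfl
    rw [← h3]
    exact Submodule.finrank_mono hsub
  have hfinal : Module.finrank K ↥S = M.rank := rfl
  omega

lemma padFirst_apply_lt {K : Type*} [Zero K] {n' m' : ℕ} (r r' : ℕ) (h : r' ≤ n')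
    (F : Matrix (Fin n') (Fin m') K) (a : Fin r) (c : Fin m') (ha : (a : ℕ) < r') :
    padFirst r r' h F a c = F ⟨a, lt_of_lt_of_le ha h⟩ c := by
  rw [padFirst, Matrix.of_apply, dif_pos ha]

end AuxHelpers

/-- Corollary, TUICP with interaction digraph `H_61`.
Let `I` be a two-sender unicast index coding problem (`I.f` bijective) with
`r_2 ≥ r_{12} ≥ r_1` (`r_A = mrk_A`).  Assume:
(a) completions `F1 ≈ F_x^(1)`, `F2 ≈ F_x^(2)` of ranks `r1, r2` realize `F̃_x` as a joint
extension of the type of the joint-extension theorem (first rows span via `P1m`, `P2m`;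
stacked matrices vanish at non-side-information entries: hyps `hJE1`, `hJE2`);
(b) a completion `F12 ≈ F_x^(12)` of rank `r12` has its first `r12` rows spanning its row
space, `P12m` expressing the remaining rows, and `P2m` expressing the last rows of `F2`;
(c) with `F̂^(1)` the first `r1` rows of `F1` padded to `r12` rows, `[F̂^(1) ; P12m·F̂^(1)]`
vanishes at every entry at which the corresponding receiver with demand in `P_{12}` does
not have the corresponding `P_1`-message in its side information;
(d) with `F̂^(12)` the first `r12` rows of `F12` padded to `r2` rows, `[F̂^(12) ; P2m·F̂^(12)]`
vanishes at every entry at which the corresponding receiver with demand in `P_2` does not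
have the corresponding `P_{12}`-message in its side information;
(e) no receiver with demand in `P_{12}` has side information in `P_2` (the interaction
`I_{12} → I_2` does not exist).
Then `l*_q(I) = r_2 + r_{12} = mrk_2 + mrk_{12}`. -/
theorem stmt18 (K : Type*) [Field K] [Fintype K] {m n : ℕ} (I : TGICP m n)
    (hunicast : Function.Bijective I.f)
    (r1 r2 r12 : ℕ)
    (hr1 : r1 = I.mrk K (I.M1 \ I.M2)) (hr2 : r2 = I.mrk K (I.M2 \ I.M1))
    (hr12 : r12 = I.mrk K (I.M1 ∩ I.M2))
    (hord1 : r1 ≤ r12) (hord2 : r12 ≤ r2)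
    (n1 m1 n2 m2 n12 m12 : ℕ)
    (eR1 : Fin n1 ≃ {i : Fin n // I.f i ∈ I.M1 \ I.M2}) (eM1 : Fin m1 ≃ ↥(I.M1 \ I.M2))
    (eR2 : Fin n2 ≃ {i : Fin n // I.f i ∈ I.M2 \ I.M1}) (eM2 : Fin m2 ≃ ↥(I.M2 \ I.M1))
    (eR12 : Fin n12 ≃ {i : Fin n // I.f i ∈ I.M1 ∩ I.M2})
    (eM12 : Fin m12 ≃ ↥(I.M1 ∩ I.M2))
    (F1 : Matrix (Fin n1) (Fin m1) K) (F2 : Matrix (Fin n2) (Fin m2) K)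
    (F12 : Matrix (Fin n12) (Fin m12) K)
    (hF1 : SubCompletes I (I.M1 \ I.M2) eR1 eM1 F1)
    (hF2 : SubCompletes I (I.M2 \ I.M1) eR2 eM2 F2)
    (hF12 : SubCompletes I (I.M1 ∩ I.M2) eR12 eM12 F12)
    (hrk1 : F1.rank = r1) (hrk2 : F2.rank = r2) (hrk12 : F12.rank = r12)
    (hn1 : r1 ≤ n1) (hn2 : r2 ≤ n2) (hn12 : r12 ≤ n12)
    (P1m : Matrix (Fin n1) (Fin r1) K) (P2m : Matrix (Fin n2) (Fin r2) K)
    (P12m : Matrix (Fin n12) (Fin r12) K)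
    (hP1 : ∀ k : Fin n1, r1 ≤ (k : ℕ) →
      ∀ c, F1 k c = ∑ t, P1m k t * F1 (Fin.castLE hn1 t) c)
    (hP2 : ∀ k : Fin n2, r2 ≤ (k : ℕ) →
      ∀ c, F2 k c = ∑ t, P2m k t * F2 (Fin.castLE hn2 t) c)
    (hP12 : ∀ k : Fin n12, r12 ≤ (k : ℕ) →
      ∀ c, F12 k c = ∑ t, P12m k t * F12 (Fin.castLE hn12 t) c)
    (hJE1 : ∀ (k : Fin n1) (c : Fin m2), (eM2 c).1 ∉ I.χ (eR1 k).1 →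
      stacked P1m (padFirst r1 r2 hn2 F2) k c = 0)
    (hJE2 : ∀ (k : Fin n2) (c : Fin m1), (eM1 c).1 ∉ I.χ (eR2 k).1 →
      stacked P2m (padFirst r2 r1 hn1 F1) k c = 0)
    (hc : ∀ (k : Fin n12) (c : Fin m1), (eM1 c).1 ∉ I.χ (eR12 k).1 →
      stacked P12m (padFirst r12 r1 hn1 F1) k c = 0)
    (hd : ∀ (k : Fin n2) (c : Fin m12), (eM12 c).1 ∉ I.χ (eR2 k).1 →
      stacked P2m (padFirst r2 r12 hn12 F12) k c = 0)
    (he : ∀ i, I.f i ∈ I.M1 ∩ I.M2 → ∀ p ∈ I.χ i, p ∉ I.M2 \ I.M1) :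
    I.optLen K = r2 + r12 := by
    classical
  -- the set of achievable aggregate lengths
  set Ach : Set ℕ := {L | ∃ (l1 l2 : ℕ) (G1 : Matrix (Fin l1) ↥I.M1 K)
    (G2 : Matrix (Fin l2) ↥I.M2 K), I.IsCode K G1 G2 ∧ L = l1 + l2} with hAch
  -- ===================== CONVERSE =====================
  have hconv : ∀ L ∈ Ach, r2 + r12 ≤ L := by
    rintro L ⟨l1, l2, H1, H2, hcode, rfl⟩
    choose a2 b2 u2 hsupp2 hrow2 using
      (fun i : {i : Fin n // I.f i ∈ I.M2 \ I.M1} => decode_rows I H1 H2 hcode i.1)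
    choose a12 b12 u12 hsupp12 hrow12 using
      (fun i : {i : Fin n // I.f i ∈ I.M1 ∩ I.M2} => decode_rows I H1 H2 hcode i.1)
    -- vanishing of the u's on the relevant columns
    have hu2 : ∀ (i : {i : Fin n // I.f i ∈ I.M2 \ I.M1}) (j : Fin m),
        j ∉ I.χ i.1 → j ∉ I.M1 \ I.M2 → u2 i j = 0 := by
      intro i j h1 h2
      exact hsupp2 i j (by
        intro hc
        rcases hc with hc | hc
        · exact h1 hc
        · exact h2 hc)
    have hu12 : ∀ (i : {i : Fin n // I.f i ∈ I.M1 ∩ I.M2}) (j : Fin m),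
        j ∉ I.χ i.1 → j ∉ I.M1 \ I.M2 → u12 i j = 0 := by
      intro i j h1 h2
      exact hsupp12 i j (by
        intro hc
        rcases hc with hc | hc
        · exact h1 hc
        · exact h2 hc)
    set B : Matrix {i : Fin n // I.f i ∈ I.M2 \ I.M1} ↥(I.M2 \ I.M1) K :=
      fun i j => (if j.1 = I.f i.1 then 1 else 0) - u2 i j.1 with hBdef
    set Bp : Matrix {i : Fin n // I.f i ∈ I.M2 \ I.M1} ↥(I.M1 ∩ I.M2) K :=
      fun i j => (if j.1 = I.f i.1 then 1 else 0) - u2 i j.1 with hBpdef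
    set Dm : Matrix {i : Fin n // I.f i ∈ I.M1 ∩ I.M2} ↥(I.M1 ∩ I.M2) K :=
      fun i j => (if j.1 = I.f i.1 then 1 else 0) - u12 i j.1 with hDdef
    -- B is a completion of the fitting matrix of the subproblem on P2
    have hBC : Completes (fun i : {i : Fin n // I.f i ∈ I.M2 \ I.M1} =>
        (⟨I.f i.1, i.2⟩ : ↥(I.M2 \ I.M1))) (fun i => {j : ↥(I.M2 \ I.M1) | j.1 ∈ I.χ i.1}) B := by
      constructor
      · intro i
        have h0 : u2 i (I.f i.1) = 0 :=
          hu2 i _ (I.not_mem i.1) (fun hc => hc.2 i.2.1)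
        simp [hBdef, h0]
      · intro i j hne hns
        have hj1 : j.1 ≠ I.f i.1 := by
          intro hc
          exact hne (Subtype.ext hc)
        have h0 : u2 i j.1 = 0 := hu2 i _ hns (fun hc => hc.2 j.2.1)
        simp [hBdef, hj1, h0]
    have hDC : Completes (fun i : {i : Fin n // I.f i ∈ I.M1 ∩ I.M2} =>
        (⟨I.f i.1, i.2⟩ : ↥(I.M1 ∩ I.M2))) (fun i => {j : ↥(I.M1 ∩ I.M2) | j.1 ∈ I.χ i.1}) Dm := by
      constructor
      · intro i
        have h0 : u12 i (I.f i.1) = 0 :=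
          hu12 i _ (I.not_mem i.1) (fun hc => hc.2 i.2.2)
        simp [hDdef, h0]
      · intro i j hne hns
        have hj1 : j.1 ≠ I.f i.1 := by
          intro hc
          exact hne (Subtype.ext hc)
        have h0 : u12 i j.1 = 0 := hu12 i _ hns (fun hc => hc.2 j.2.2)
        simp [hDdef, hj1, h0]
    have hmrk2 : I.mrk K (I.M2 \ I.M1) ≤ B.rank := Nat.sInf_le ⟨B, hBC, by congr!⟩
    have hmrk12 : I.mrk K (I.M1 ∩ I.M2) ≤ Dm.rank := Nat.sInf_le ⟨Dm, hDC, by congr!⟩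
    -- the stacked matrix factors through the code
    set Am : Matrix ({i : Fin n // I.f i ∈ I.M2 \ I.M1} ⊕ {i : Fin n // I.f i ∈ I.M1 ∩ I.M2})
        (Fin l1 ⊕ Fin l2) K :=
      fun i' k' => Sum.elim (fun i => Sum.elim (a2 i) (b2 i) k')
        (fun i => Sum.elim (a12 i) (b12 i) k') i' with hAm
    set T' : Matrix (Fin l1 ⊕ Fin l2) (↥(I.M2 \ I.M1) ⊕ ↥(I.M1 ∩ I.M2)) K :=
      fun k' j' => Sum.elim (fun k => ext1 I H1 k (Sum.elim Subtype.val Subtype.val j'))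
        (fun k => ext2 I H2 k (Sum.elim Subtype.val Subtype.val j')) k' with hT'
    have hfact : Matrix.fromBlocks B Bp 0 Dm = Am * T' := by
      ext i' j'
      rw [Matrix.mul_apply, Fintype.sum_sum_type]
      cases i' with
      | inl i =>
        have key : ∀ j : Fin m, (if j = I.f i.1 then (1:K) else 0) - u2 i j
            = (∑ k, a2 i k * ext1 I H1 k j) + (∑ k, b2 i k * ext2 I H2 k j) := by
          intro j
          have := hrow2 i j
          rw [this]; ring
        cases j' with
        | inl j =>
          have := key j.1
          simp only [Matrix.fromBlocks_apply₁₁, hBdef, hAm, hT', Sum.elim_inl, Sum.elim_inr]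
          exact this
        | inr j =>
          have := key j.1
          simp only [Matrix.fromBlocks_apply₁₂, hBpdef, hAm, hT', Sum.elim_inl, Sum.elim_inr]
          exact this
      | inr i =>
        have key : ∀ j : Fin m, (if j = I.f i.1 then (1:K) else 0) - u12 i j
            = (∑ k, a12 i k * ext1 I H1 k j) + (∑ k, b12 i k * ext2 I H2 k j) := by
          intro j
          have := hrow12 i j
          rw [this]; ring
        cases j' with
        | inl j =>
          -- the zero block
          have hne : j.1 ≠ I.f i.1 := by
            intro hc
            exact j.2.2 (hc ▸ i.2.1)
          have hnχ : j.1 ∉ I.χ i.1 := fun hc => he i.1 i.2 j.1 hc j.2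
          have h0 : u12 i j.1 = 0 := hu12 i _ hnχ (fun hc => hc.2 j.2.1)
          have := key j.1
          rw [if_neg hne, h0, sub_zero] at this
          simp only [Matrix.fromBlocks_apply₂₁, Matrix.zero_apply, hAm, hT',
            Sum.elim_inl, Sum.elim_inr]
          rw [← this]
        | inr j =>
          have := key j.1
          simp only [Matrix.fromBlocks_apply₂₂, hDdef, hAm, hT', Sum.elim_inl, Sum.elim_inr]
          exact this
    have hrankM : (Matrix.fromBlocks B Bp (0 : Matrix _ _ K) Dm).rank ≤ l1 + l2 := by
      rw [hfact]
      refine le_trans (Matrix.rank_mul_le_right Am T') (le_trans T'.rank_le_card_height ?_)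
      simp
    have hblocks := rank_blocks B Bp Dm
    omega
  -- ===================== ACHIEVABILITY =====================
  have hmem : (r12 + r2) ∈ Ach := by
    set G1 : Matrix (Fin r12) ↥I.M1 K := fun k j =>
      if h1 : j.1 ∈ I.M1 \ I.M2 then padFirst r12 r1 hn1 F1 k (eM1.symm ⟨j.1, h1⟩)
      else F12 (Fin.castLE hn12 k) (eM12.symm ⟨j.1, j.2, by
        by_contra hn
        exact h1 ⟨j.2, hn⟩⟩) with hG1
    set G2 : Matrix (Fin r2) ↥I.M2 K := fun k j =>
      if h2 : j.1 ∈ I.M2 \ I.M1 then F2 (Fin.castLE hn2 k) (eM2.symm ⟨j.1, h2⟩)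
      else padFirst r2 r12 hn12 F12 k (eM12.symm ⟨j.1, by
        by_contra hn
        exact h2 ⟨j.2, hn⟩, j.2⟩) with hG2
    have hx1P1 : ∀ (k : Fin r12) (j : Fin m) (hj : j ∈ I.M1 \ I.M2),
        ext1 I G1 k j = padFirst r12 r1 hn1 F1 k (eM1.symm ⟨j, hj⟩) := by
      intro k j hj
      rw [ext1, dif_pos hj.1]
      simp only [hG1]
      rw [dif_pos hj]
    have hx1P12 : ∀ (k : Fin r12) (j : Fin m) (hj : j ∈ I.M1 ∩ I.M2),
        ext1 I G1 k j = F12 (Fin.castLE hn12 k) (eM12.symm ⟨j, hj⟩) := by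
      intro k j hj
      rw [ext1, dif_pos hj.1]
      simp only [hG1]
      rw [dif_neg (fun hdd => hdd.2 hj.2)]
    have hx1P2 : ∀ (k : Fin r12) (j : Fin m), j ∉ I.M1 → ext1 I G1 k j = 0 := by
      intro k j hj
      rw [ext1, dif_neg hj]
    have hx2P2 : ∀ (k : Fin r2) (j : Fin m) (hj : j ∈ I.M2 \ I.M1),
        ext2 I G2 k j = F2 (Fin.castLE hn2 k) (eM2.symm ⟨j, hj⟩) := by
      intro k j hj
      rw [ext2, dif_pos hj.1]
      simp only [hG2]
      rw [dif_pos hj]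
    have hx2P12 : ∀ (k : Fin r2) (j : Fin m) (hj : j ∈ I.M1 ∩ I.M2),
        ext2 I G2 k j = padFirst r2 r12 hn12 F12 k (eM12.symm ⟨j, hj⟩) := by
      intro k j hj
      rw [ext2, dif_pos hj.2]
      simp only [hG2]
      rw [dif_neg (fun hdd => hdd.2 hj.1)]
    have hx2P1 : ∀ (k : Fin r2) (j : Fin m), j ∉ I.M2 → ext2 I G2 k j = 0 := by
      intro k j hj
      rw [ext2, dif_neg hj]
    have hcode : I.IsCode K G1 G2 := by
      apply code_of_rows
      intro i
      have hcov : I.f i ∈ I.M1 ∪ I.M2 := by rw [I.cover]; exact Set.mem_univ _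
      by_cases hfi1 : I.f i ∈ I.M1
      · by_cases hfi2 : I.f i ∈ I.M2
        · -- ========== receiver in I_12 ==========
          have hA : I.f i ∈ I.M1 ∩ I.M2 := ⟨hfi1, hfi2⟩
          set k0 := eR12.symm ⟨i, hA⟩ with hk0
          have hek0 : eR12 k0 = ⟨i, hA⟩ := Equiv.apply_symm_apply _ _
          refine ⟨coefGen (le_refl r12) P12m k0, 0, ?_⟩
          intro j hj
          have hzb : ∑ k, (0 : Fin r2 → K) k * ext2 I G2 k j = 0 := by simp
          rw [hzb, add_zero]
          by_cases hj1 : j ∈ I.M1 <;> by_cases hj2 : j ∈ I.M2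
          · -- j ∈ P12 : the subproblem fitting matrix row
            have hjr : j ∈ I.M1 ∩ I.M2 := ⟨hj1, hj2⟩
            have hsum : ∑ k, coefGen (le_refl r12) P12m k0 k * ext1 I G1 k j
                = F12 k0 (eM12.symm ⟨j, hjr⟩) := by
              rw [Finset.sum_congr rfl (fun k _ => by rw [hx1P12 k j hjr])]
              rw [sum_coefGen]
              by_cases hk : (k0 : ℕ) < r12
              · rw [dif_pos hk]
                congr 1
              · rw [dif_neg hk]
                exact (hP12 k0 (le_of_not_gt hk) _).symm
            rw [hsum]
            by_cases hdem : j = I.f i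
            · rw [if_pos hdem]
              apply (hF12 k0 (eM12.symm ⟨j, hjr⟩)).1
              simp only [Equiv.apply_symm_apply, hek0]
              exact hdem
            · rw [if_neg hdem]
              apply (hF12 k0 (eM12.symm ⟨j, hjr⟩)).2 <;>
                simp only [Equiv.apply_symm_apply, hek0]
              · exact hdem
              · exact hj
          · -- j ∈ P1 : the joint-extension interaction with I_1
            have hjr : j ∈ I.M1 \ I.M2 := ⟨hj1, hj2⟩
            have hsum : ∑ k, coefGen (le_refl r12) P12m k0 k * ext1 I G1 k j
                = stacked P12m (padFirst r12 r1 hn1 F1) k0 (eM1.symm ⟨j, hjr⟩) := by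
              rw [Finset.sum_congr rfl (fun k _ => by rw [hx1P1 k j hjr])]
              rw [sum_coefGen, stacked]
              by_cases hk : (k0 : ℕ) < r12
              · rw [dif_pos hk]
                simp only [Matrix.of_apply]
                rw [dif_pos hk]
                try rfl
              · rw [dif_neg hk]
                simp only [Matrix.of_apply]
                rw [dif_neg hk]
                try rfl
            rw [hsum]
            have hnd : j ≠ I.f i := fun hcq => hj2 (hcq ▸ hfi2)
            rw [if_neg hnd]
            apply hc
            simp only [Equiv.apply_symm_apply, hek0]
            exact hj
          · -- j ∈ P2 : zero column of G1
            have hsum : ∑ k, coefGen (le_refl r12) P12m k0 k * ext1 I G1 k j = 0 := by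
              rw [Finset.sum_congr rfl (fun k _ => by rw [hx1P2 k j hj1, mul_zero])]
              exact Finset.sum_const_zero
            rw [hsum]
            have hnd : j ≠ I.f i := fun hcq => hj1 (hcq ▸ hfi1)
            rw [if_neg hnd]
          · have hjcov : j ∈ I.M1 ∪ I.M2 := by rw [I.cover]; exact Set.mem_univ _
            rw [Set.mem_union] at hjcov
            rcases hjcov with h | h
            · exact absurd h hj1
            · exact absurd h hj2
        · -- ========== receiver in I_1 ==========
          have hA : I.f i ∈ I.M1 \ I.M2 := ⟨hfi1, hfi2⟩
          set k0 := eR1.symm ⟨i, hA⟩ with hk0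
          have hek0 : eR1 k0 = ⟨i, hA⟩ := Equiv.apply_symm_apply _ _
          have h12 : r1 ≤ r2 := le_trans hord1 hord2
          refine ⟨coefGen hord1 P1m k0, -(coefGen h12 P1m k0), ?_⟩
          intro j hj
          by_cases hj1 : j ∈ I.M1 <;> by_cases hj2 : j ∈ I.M2
          · -- j ∈ P12 : the two transmissions cancel
            have hjr : j ∈ I.M1 ∩ I.M2 := ⟨hj1, hj2⟩
            have hnd : j ≠ I.f i := fun hcq => hfi2 (hcq ▸ hj2)
            rw [if_neg hnd]
            have hsum1 : ∑ k, coefGen hord1 P1m k0 k * ext1 I G1 k j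
                = if hk : (k0 : ℕ) < r1
                  then F12 (Fin.castLE hn12 ⟨k0.1, lt_of_lt_of_le hk hord1⟩)
                    (eM12.symm ⟨j, hjr⟩)
                  else ∑ t : Fin r1, P1m k0 t *
                    F12 (Fin.castLE hn12 (Fin.castLE hord1 t)) (eM12.symm ⟨j, hjr⟩) := by
              rw [Finset.sum_congr rfl (fun k _ => by rw [hx1P12 k j hjr])]
              rw [sum_coefGen]
            have hsum2 : ∑ k, (-(coefGen h12 P1m k0)) k * ext2 I G2 k j
                = -(if hk : (k0 : ℕ) < r1
                  then F12 (Fin.castLE hn12 ⟨k0.1, lt_of_lt_of_le hk hord1⟩)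
                    (eM12.symm ⟨j, hjr⟩)
                  else ∑ t : Fin r1, P1m k0 t *
                    F12 (Fin.castLE hn12 (Fin.castLE hord1 t)) (eM12.symm ⟨j, hjr⟩)) := by
              have : ∀ k, (-(coefGen h12 P1m k0)) k * ext2 I G2 k j
                  = -(coefGen h12 P1m k0 k *
                      padFirst r2 r12 hn12 F12 k (eM12.symm ⟨j, hjr⟩)) := by
                intro k
                rw [Pi.neg_apply, hx2P12 k j hjr, neg_mul]
              rw [Finset.sum_congr rfl (fun k _ => this k), Finset.sum_neg_distrib]
              congr 1
              rw [sum_coefGen]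
              by_cases hk : (k0 : ℕ) < r1
              · rw [dif_pos hk, dif_pos hk]
                exact padFirst_apply_lt r2 r12 hn12 F12 _ _ (lt_of_lt_of_le hk hord1)
              · rw [dif_neg hk, dif_neg hk]
                refine Finset.sum_congr rfl (fun t _ => ?_)
                exact congrArg (fun z => P1m k0 t * z)
                  (padFirst_apply_lt r2 r12 hn12 F12 _ _ (lt_of_lt_of_le t.2 hord1))
            rw [hsum1, hsum2, add_neg_cancel]
          · -- j ∈ P1 : the subproblem fitting matrix row
            have hjr : j ∈ I.M1 \ I.M2 := ⟨hj1, hj2⟩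
            have hsum1 : ∑ k, coefGen hord1 P1m k0 k * ext1 I G1 k j
                = F1 k0 (eM1.symm ⟨j, hjr⟩) := by
              rw [Finset.sum_congr rfl (fun k _ => by rw [hx1P1 k j hjr])]
              rw [sum_coefGen]
              by_cases hk : (k0 : ℕ) < r1
              · rw [dif_pos hk]
                exact padFirst_apply_lt r12 r1 hn1 F1 _ _ hk
              · rw [dif_neg hk]
                have hpt : ∀ t : Fin r1,
                    padFirst r12 r1 hn1 F1 (Fin.castLE hord1 t) (eM1.symm ⟨j, hjr⟩)
                    = F1 (Fin.castLE hn1 t) (eM1.symm ⟨j, hjr⟩) := by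
                  intro t
                  exact padFirst_apply_lt r12 r1 hn1 F1 _ _ t.2
                rw [Finset.sum_congr rfl (fun t _ => by rw [hpt t])]
                exact (hP1 k0 (le_of_not_gt hk) _).symm
            have hsum2 : ∑ k, (-(coefGen h12 P1m k0)) k * ext2 I G2 k j = 0 := by
              rw [Finset.sum_congr rfl
                (fun k _ => by rw [hx2P1 k j hj2, mul_zero])]
              exact Finset.sum_const_zero
            rw [hsum1, hsum2, add_zero]
            by_cases hdem : j = I.f i
            · rw [if_pos hdem]
              apply (hF1 k0 (eM1.symm ⟨j, hjr⟩)).1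
              simp only [Equiv.apply_symm_apply, hek0]
              exact hdem
            · rw [if_neg hdem]
              apply (hF1 k0 (eM1.symm ⟨j, hjr⟩)).2 <;>
                simp only [Equiv.apply_symm_apply, hek0]
              · exact hdem
              · exact hj
          · -- j ∈ P2 : joint extension with I_2
            have hjr : j ∈ I.M2 \ I.M1 := ⟨hj2, hj1⟩
            have hsum1 : ∑ k, coefGen hord1 P1m k0 k * ext1 I G1 k j = 0 := by
              rw [Finset.sum_congr rfl (fun k _ => by rw [hx1P2 k j hj1, mul_zero])]
              exact Finset.sum_const_zero
            have hsum2 : ∑ k, (-(coefGen h12 P1m k0)) k * ext2 I G2 k j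
                = -(stacked P1m (padFirst r1 r2 hn2 F2) k0 (eM2.symm ⟨j, hjr⟩)) := by
              have : ∀ k, (-(coefGen h12 P1m k0)) k * ext2 I G2 k j
                  = -(coefGen h12 P1m k0 k *
                      F2 (Fin.castLE hn2 k) (eM2.symm ⟨j, hjr⟩)) := by
                intro k
                rw [Pi.neg_apply, hx2P2 k j hjr, neg_mul]
              rw [Finset.sum_congr rfl (fun k _ => this k), Finset.sum_neg_distrib]
              congr 1
              rw [sum_coefGen, stacked]
              by_cases hk : (k0 : ℕ) < r1
              · rw [dif_pos hk]
                simp only [Matrix.of_apply]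
                rw [dif_pos hk]
                exact (padFirst_apply_lt r1 r2 hn2 F2 ⟨↑k0, hk⟩ _ (lt_of_lt_of_le hk h12)).symm
              · rw [dif_neg hk]
                simp only [Matrix.of_apply]
                rw [dif_neg hk]
                refine Finset.sum_congr rfl (fun t _ => ?_)
                exact congrArg (fun z => P1m k0 t * z)
                  (padFirst_apply_lt r1 r2 hn2 F2 t _ (lt_of_lt_of_le t.2 h12)).symm
            rw [hsum1, hsum2, zero_add]
            have hnd : j ≠ I.f i := fun hcq => hj1 (hcq ▸ hfi1)
            rw [if_neg hnd]
            rw [hJE1 k0 (eM2.symm ⟨j, hjr⟩) (by simp only [Equiv.apply_symm_apply, hek0]; exact hj)]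
            exact neg_zero
          · have hjcov : j ∈ I.M1 ∪ I.M2 := by rw [I.cover]; exact Set.mem_univ _
            rw [Set.mem_union] at hjcov
            rcases hjcov with h | h
            · exact absurd h hj1
            · exact absurd h hj2
      · -- ========== receiver in I_2 ==========
        have hfi2 : I.f i ∈ I.M2 := hcov.resolve_left hfi1
        have hA : I.f i ∈ I.M2 \ I.M1 := ⟨hfi2, hfi1⟩
        set k0 := eR2.symm ⟨i, hA⟩ with hk0
        have hek0 : eR2 k0 = ⟨i, hA⟩ := Equiv.apply_symm_apply _ _
        refine ⟨0, coefGen (le_refl r2) P2m k0, ?_⟩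
        intro j hj
        have hza : ∑ k, (0 : Fin r12 → K) k * ext1 I G1 k j = 0 := by simp
        rw [hza, zero_add]
        by_cases hj1 : j ∈ I.M1 <;> by_cases hj2 : j ∈ I.M2
        · -- j ∈ P12 : interaction with I_12
          have hjr : j ∈ I.M1 ∩ I.M2 := ⟨hj1, hj2⟩
          have hsum : ∑ k, coefGen (le_refl r2) P2m k0 k * ext2 I G2 k j
              = stacked P2m (padFirst r2 r12 hn12 F12) k0 (eM12.symm ⟨j, hjr⟩) := by
            rw [Finset.sum_congr rfl (fun k _ => by rw [hx2P12 k j hjr])]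
            rw [sum_coefGen, stacked]
            by_cases hk : (k0 : ℕ) < r2
            · rw [dif_pos hk]
              simp only [Matrix.of_apply]
              rw [dif_pos hk]
              try rfl
            · rw [dif_neg hk]
              simp only [Matrix.of_apply]
              rw [dif_neg hk]
              try rfl
          rw [hsum]
          have hnd : j ≠ I.f i := fun hcq => hfi1 (hcq ▸ hj1)
          rw [if_neg hnd]
          apply hd
          simp only [Equiv.apply_symm_apply, hek0]
          exact hj
        · -- j ∈ P1 : zero column of G2
          have hsum : ∑ k, coefGen (le_refl r2) P2m k0 k * ext2 I G2 k j = 0 := by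
            rw [Finset.sum_congr rfl (fun k _ => by rw [hx2P1 k j hj2, mul_zero])]
            exact Finset.sum_const_zero
          rw [hsum]
          have hnd : j ≠ I.f i := fun hcq => hj2 (hcq ▸ hfi2)
          rw [if_neg hnd]
        · -- j ∈ P2 : the subproblem fitting matrix row
          have hjr : j ∈ I.M2 \ I.M1 := ⟨hj2, hj1⟩
          have hsum : ∑ k, coefGen (le_refl r2) P2m k0 k * ext2 I G2 k j
              = F2 k0 (eM2.symm ⟨j, hjr⟩) := by
            rw [Finset.sum_congr rfl (fun k _ => by rw [hx2P2 k j hjr])]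
            rw [sum_coefGen]
            by_cases hk : (k0 : ℕ) < r2
            · rw [dif_pos hk]
              congr 1
            · rw [dif_neg hk]
              exact (hP2 k0 (le_of_not_gt hk) _).symm
          rw [hsum]
          by_cases hdem : j = I.f i
          · rw [if_pos hdem]
            apply (hF2 k0 (eM2.symm ⟨j, hjr⟩)).1
            simp only [Equiv.apply_symm_apply, hek0]
            exact hdem
          · rw [if_neg hdem]
            apply (hF2 k0 (eM2.symm ⟨j, hjr⟩)).2 <;>
              simp only [Equiv.apply_symm_apply, hek0]
            · exact hdem
            · exact hj
        · have hjcov : j ∈ I.M1 ∪ I.M2 := by rw [I.cover]; exact Set.mem_univ _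
          rw [Set.mem_union] at hjcov
          rcases hjcov with h | h
          · exact absurd h hj1
          · exact absurd h hj2
    exact ⟨r12, r2, G1, G2, hcode, rfl⟩
  have hle : I.optLen K ≤ r2 + r12 := by
    rw [TGICP.optLen, ← hAch, add_comm r2 r12]
    exact Nat.sInf_le hmem
  have hge : r2 + r12 ≤ I.optLen K := by
    rw [TGICP.optLen, ← hAch]
    exact le_csInf ⟨_, hmem⟩ hconv
  omega
end

section
/- Let I be a two-sender unicast index coding problem (TUICP: each message is demanded by exactly one receiver) with interaction digraph of type H_62; write r_A = mrk_A for A ∈ {1, 2, 12} and assume r_1 ≥ r_{12} ≥ r_2. Assume: (a) there exist completions F^{(1)} ≈ F_x^{(1)}, F^{(2)} ≈ F_x^{(2)} of ranks r_1, r_2 that realize F̃_x as a joint extension of the type of the joint-extension theorem; (b) there is a completion F^{(12)} ≈ F_x^{(12)} of rank r_{12} whose first r_{12} rows span its row space, P^{(12)} is the matrix with the last rows of F^{(12)} equal to P^{(12)} F^{(12)}_{[r_{12}]}, and P^{(1)} is the matrix with the last rows of F^{(1)} equal to P^{(1)} F^{(1)}_{[r_1]}; (c) with F̂^{(12)} :=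 F^{(12)}_{[r_{12}]} with r_1 − r_{12} zero rows appended, the stacked matrix [F̂^{(12)}; P^{(1)} F̂^{(12)}] vanishes at every entry at which the corresponding receiver with demand in P_1 does not have the corresponding P_{12}-message in its side information; (d) with F̂^{(2)} := F^{(2)}_{[r_2]} with r_{12} − r_2 zero rows appended, the stacked matrix [F̂^{(2)}; P^{(12)} F̂^{(2)}] vanishes at every entry at which the corresponding receiver with demand in P_{12} does not have the corresponding P_2-message in its side information; (e) no receiver with demand in P_{12} has side information in P_1 (the interaction I_{12} → I_1 does not exist). Then l*_q(I) = r_1 + r_{12} = mrk_1 + mrk_{12}. -/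
open scoped Classical

/-! ### Auxiliary lemmas -/

lemma sum_subtype_eq_sum_ite {K : Type*} [AddCommMonoid K] {m : ℕ} (S : Set (Fin m))
    {F : Fintype ↥S} [∀ p, Decidable (p ∈ S)] (g : Fin m → K) :
    (@Finset.univ ↥S F).sum (fun j => g j.1) = ∑ p, if p ∈ S then g p else 0 := by
  rw [← Finset.sum_filter]
  exact (Finset.sum_subtype (Finset.filter (· ∈ S) Finset.univ) (fun x => by simp) g).symm

lemma sum_subtype_eq_sum_ambient {K : Type*} [AddCommMonoid K] {m : ℕ} (S : Set (Fin m))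
    {F : Fintype ↥S} [∀ p, Decidable (p ∈ S)] (g : Fin m → K) (h0 : ∀ p ∉ S, g p = 0) :
    (@Finset.univ ↥S F).sum (fun j => g j.1) = ∑ p, g p := by
  rw [sum_subtype_eq_sum_ite]
  refine Finset.sum_congr rfl fun p _ => ?_
  by_cases hp : p ∈ S <;> simp [hp, h0]

lemma sum_dite_subtype {K : Type*} [AddCommMonoid K] {m : ℕ} (S : Set (Fin m))
    {F : Fintype ↥S} [∀ p, Decidable (p ∈ S)] (g : ↥S → K) :
    ∑ p : Fin m, (if h : p ∈ S then g ⟨p, h⟩ else 0) = (@Finset.univ ↥S F).sum g := by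
  have h1 := sum_subtype_eq_sum_ite S (F := F)
    (fun p => if h : p ∈ S then g ⟨p, h⟩ else 0)
  have h2 : (@Finset.univ ↥S F).sum (fun j => if h : j.1 ∈ S then g ⟨j.1, h⟩ else 0) =
      (@Finset.univ ↥S F).sum g :=
    Finset.sum_congr rfl fun j _ => by rw [dif_pos j.2]
  rw [h2] at h1
  rw [h1]
  refine Finset.sum_congr rfl fun p _ => ?_
  by_cases hp : p ∈ S <;> simp [hp]

lemma minrk_le_finrank {K : Type*} [Field K] {R M : Type*} [Fintype R] [Fintype M]
    (f : R → M) (χ : R → Set M) (hfχ : ∀ i, f i ∉ χ i)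
    {W : Type*} [AddCommGroup W] [Module K W] [FiniteDimensional K W]
    (φ : (M → K) →ₗ[K] W)
    (h : ∀ i (z : M → K), φ z = 0 → (∀ j ∈ χ i, z j = 0) → z (f i) = 0) :
    minrk K f χ ≤ Module.finrank K W := by
  classical
  let T : Module.Dual K W →ₗ[K] (M → K) :=
    { toFun := fun ψ j => ψ (φ (Pi.single j (1 : K)))
      map_add' := by intro ψ₁ ψ₂; funext j; simp
      map_smul' := by intro c ψ; funext j; simp }
  have main : ∀ i, ∃ ψ : Module.Dual K W,
      (T ψ) (f i) = 1 ∧ ∀ j, j ≠ f i → j ∉ χ i → (T ψ) j = 0 := by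
    intro i
    let ρ : (M → K) →ₗ[K] (↥(χ i) → K) := LinearMap.funLeft K K (fun j : ↥(χ i) => j.1)
    let pair : (M → K) →ₗ[K] W × (↥(χ i) → K) := φ.prod ρ
    have hmem : (LinearMap.proj (f i) : (M → K) →ₗ[K] K) ∈
        (LinearMap.ker pair).dualAnnihilator := by
      rw [Submodule.mem_dualAnnihilator]
      intro z hz
      rw [LinearMap.mem_ker] at hz
      have h1 : φ z = 0 := congrArg Prod.fst hz
      have h2 : ∀ j ∈ χ i, z j = 0 := fun j hj => congrFun (congrArg Prod.snd hz) ⟨j, hj⟩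
      exact h i z h1 h2
    rw [← LinearMap.range_dualMap_eq_dualAnnihilator_ker] at hmem
    obtain ⟨ξ, hξ⟩ := hmem
    have key : ∀ v : M → K, ξ (pair v) = v (f i) := by
      intro v
      have := LinearMap.congr_fun hξ v
      simpa [LinearMap.dualMap_apply'] using this
    have hpair : ∀ v : M → K, pair v = (φ v, 0) + (0, ρ v) := by
      intro v; simp [pair, Prod.ext_iff]
    refine ⟨ξ.comp (LinearMap.inl K W (↥(χ i) → K)), ?_, ?_⟩
    · have hρ : ρ (Pi.single (f i) (1 : K)) = 0 := by
        funext j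
        have hne : (j : M) ≠ f i := fun hh => hfχ i (hh ▸ j.2)
        simp [ρ, LinearMap.funLeft, Pi.single_eq_of_ne hne]
      have : ξ ((φ (Pi.single (f i) (1:K)), (0 : ↥(χ i) → K))) = 1 := by
        have hk := key (Pi.single (f i) (1:K))
        rw [hpair, map_add] at hk
        simp only [hρ] at hk
        rw [show ((0 : W), (0 : ↥(χ i) → K)) = 0 from rfl, map_zero, add_zero] at hk
        simpa using hk
      simpa [T, LinearMap.inl_apply] using this
    · intro j hj hjχ
      have hρ : ρ (Pi.single j (1 : K)) = 0 := by
        funext j'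
        have hne : (j' : M) ≠ j := fun hh => hjχ (hh ▸ j'.2)
        simp [ρ, LinearMap.funLeft, Pi.single_eq_of_ne hne]
      have : ξ ((φ (Pi.single j (1:K)), (0 : ↥(χ i) → K))) = 0 := by
        have hk := key (Pi.single j (1:K))
        rw [hpair, map_add] at hk
        simp only [hρ] at hk
        rw [show ((0 : W), (0 : ↥(χ i) → K)) = 0 from rfl, map_zero, add_zero] at hk
        rw [show (Pi.single j (1:K) : M → K) (f i) = 0 from
          Pi.single_eq_of_ne (Ne.symm hj) 1] at hk
        simpa using hk
      simpa [T, LinearMap.inl_apply] using this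
  choose ψ hψ1 hψ0 using main
  let F : Matrix R M K := fun i => T (ψ i)
  have hcomp : Completes f χ F := ⟨fun i => hψ1 i, fun i j h1 h2 => hψ0 i j h1 h2⟩
  have hrank : F.rank ≤ Module.finrank K W := by
    rw [Matrix.rank_eq_finrank_span_row]
    have hle : Submodule.span K (Set.range F) ≤ LinearMap.range T := by
      rw [Submodule.span_le]
      rintro _ ⟨i, rfl⟩
      exact ⟨ψ i, rfl⟩
    calc Module.finrank K (Submodule.span K (Set.range F))
        ≤ Module.finrank K (LinearMap.range T) := Submodule.finrank_mono hle
      _ ≤ Module.finrank K (Module.Dual K W) := T.finrank_range_le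
      _ = Module.finrank K W := Subspace.dual_finrank_eq
  exact le_trans (Nat.sInf_le ⟨F, hcomp, rfl⟩) hrank

lemma decode_final {K : Type*} [Field K] {m : ℕ} (χi : Set (Fin m))
    {F : Fintype ↥χi} [∀ p, Decidable (p ∈ χi)] (fi : Fin m) (hfi : fi ∉ χi)
    (coef x : Fin m → K) (h1 : coef fi = 1)
    (h0 : ∀ p, p ≠ fi → p ∉ χi → coef p = 0) :
    (∑ p, coef p * x p) - (@Finset.univ ↥χi F).sum (fun j => coef j.1 * x j.1) = x fi := by
  rw [sum_subtype_eq_sum_ite χi (fun p => coef p * x p), ← Finset.sum_sub_distrib]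
  have hpt : ∀ p ∈ Finset.univ, coef p * x p - (if p ∈ χi then coef p * x p else 0) =
      (if p = fi then x fi else 0) := by
    intro p _
    by_cases hp : p = fi
    · subst hp
      rw [if_pos rfl, if_neg hfi, h1, one_mul, sub_zero]
    · by_cases hq : p ∈ χi
      · rw [if_pos hq, if_neg hp, sub_self]
      · rw [if_neg hq, if_neg hp, h0 p hp hq, zero_mul, sub_zero]
  rw [Finset.sum_congr rfl hpt, Finset.sum_ite_eq' Finset.univ fi (fun _ => x fi),
    if_pos (Finset.mem_univ fi)]

lemma mrk_le_finrank {K : Type*} [Field K] {m n : ℕ} (I : TGICP m n) (P : Set (Fin m))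
    {W : Type*} [AddCommGroup W] [Module K W] [FiniteDimensional K W]
    (φ : (↥P → K) →ₗ[K] W)
    (h : ∀ (i : {i : Fin n // I.f i ∈ P}) (z : ↥P → K), φ z = 0 →
      (∀ j : ↥P, j.1 ∈ I.χ i.1 → z j = 0) → z ⟨I.f i.1, i.2⟩ = 0) :
    I.mrk K P ≤ Module.finrank K W :=
  minrk_le_finrank _ _ (fun i hmem => I.not_mem i.1 hmem) φ
    (fun i z hz hzχ => h i z hz (fun j hj => hzχ j hj))

lemma converse_bound {K : Type*} [Field K] {m n : ℕ} (I : TGICP m n)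
    (he : ∀ i, I.f i ∈ I.M1 ∩ I.M2 → ∀ p ∈ I.χ i, p ∉ I.M1 \ I.M2)
    {l1 l2 : ℕ} (G1 : Matrix (Fin l1) ↥I.M1 K) (G2 : Matrix (Fin l2) ↥I.M2 K)
    (hcode : I.IsCode K G1 G2) :
    I.mrk K (I.M1 \ I.M2) + I.mrk K (I.M1 ∩ I.M2) ≤ l1 + l2 := by
  classical
  have hind : ∀ (i : Fin n) (x : Fin m → K),
      (G1.mulVec fun j => x j.1) = 0 → (G2.mulVec fun j => x j.1) = 0 →
      (∀ j ∈ I.χ i, x j = 0) → x (I.f i) = 0 := by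
    intro i x hy1 hy2 hχ
    obtain ⟨D, hD⟩ := hcode i
    have hx := hD x
    have h0 := hD 0
    rw [hy1, hy2] at hx
    have e1 : (fun j : ↥I.M1 => (0 : Fin m → K) j.1) = (0 : ↥I.M1 → K) := rfl
    have e2 : (fun j : ↥I.M2 => (0 : Fin m → K) j.1) = (0 : ↥I.M2 → K) := rfl
    rw [e1, e2, Matrix.mulVec_zero, Matrix.mulVec_zero] at h0
    have eχ : (fun j : ↥(I.χ i) => x j.1) = (fun j : ↥(I.χ i) => (0 : Fin m → K) j.1) := by
      funext j; exact hχ j.1 j.2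
    rw [eχ] at hx
    rw [hx] at h0
    simpa using h0
  have hmv1 : ∀ (x : Fin m → K) a, (G1.mulVec fun j => x j.1) a =
      ∑ p, (if h : p ∈ I.M1 then G1 a ⟨p, h⟩ * x p else 0) := by
    intro x a
    rw [show (G1.mulVec fun j => x j.1) a = ∑ j : ↥I.M1, G1 a j * x j.1 from rfl]
    rw [← sum_subtype_eq_sum_ambient I.M1 _ (fun p hp => dif_neg hp)]
    exact Finset.sum_congr rfl fun j _ => by rw [dif_pos j.2]
  have hmv2 : ∀ (x : Fin m → K) b, (G2.mulVec fun j => x j.1) b =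
      ∑ p, (if h : p ∈ I.M2 then G2 b ⟨p, h⟩ * x p else 0) := by
    intro x b
    rw [show (G2.mulVec fun j => x j.1) b = ∑ j : ↥I.M2, G2 b j * x j.1 from rfl]
    rw [← sum_subtype_eq_sum_ambient I.M2 _ (fun p hp => dif_neg hp)]
    exact Finset.sum_congr rfl fun j _ => by rw [dif_pos j.2]
  set P1 : Set (Fin m) := I.M1 \ I.M2 with hP1def
  set P12 : Set (Fin m) := I.M1 ∩ I.M2 with hP12def
  let A' : Matrix (Fin l1) ↥P1 K := fun a c => G1 a ⟨c.1, c.2.1⟩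
  let B' : Matrix (Fin l1) ↥P12 K := fun a c => G1 a ⟨c.1, c.2.1⟩
  let C' : Matrix (Fin l2) ↥P12 K := fun b c => G2 b ⟨c.1, c.2.2⟩
  set VA : Submodule K (Fin l1 → K) := LinearMap.range A'.mulVecLin with hVAdef
  have hA : I.mrk K P1 ≤ Module.finrank K ↥VA := by
    refine mrk_le_finrank I P1 A'.mulVecLin.rangeRestrict (fun i z hz hzχ => ?_)
    have hAz : A'.mulVec z = 0 := by
      have := congrArg Subtype.val hz
      simpa using this
    set x : Fin m → K := fun p => if h : p ∈ P1 then z ⟨p, h⟩ else 0 with hxdef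
    have hy1 : (G1.mulVec fun j => x j.1) = 0 := by
      funext a
      rw [hmv1 x a]
      simp only [Pi.zero_apply]
      calc (∑ p, if h : p ∈ I.M1 then G1 a ⟨p, h⟩ * x p else 0)
          = ∑ p, (if h : p ∈ P1 then A' a ⟨p, h⟩ * z ⟨p, h⟩ else 0) := by
            refine Finset.sum_congr rfl fun p _ => ?_
            by_cases h1 : p ∈ I.M1
            · by_cases h2 : p ∈ I.M2
              · have hp1 : p ∉ P1 := fun hh => hh.2 h2
                simp [h1, hp1, hxdef]
              · have hp1 : p ∈ P1 := ⟨h1, h2⟩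
                simp only [dif_pos h1, dif_pos hp1]
                rw [show x p = z ⟨p, hp1⟩ from dif_pos hp1]
            · have hp1 : p ∉ P1 := fun hh => h1 hh.1
              simp [h1, hp1]
        _ = ∑ j : ↥P1, A' a j * z j := sum_dite_subtype P1 (fun j => A' a j * z j)
        _ = 0 := congrFun hAz a
    have hy2 : (G2.mulVec fun j => x j.1) = 0 := by
      have hfun : (fun j : ↥I.M2 => x j.1) = (0 : ↥I.M2 → K) := by
        funext j
        exact dif_neg (fun hh : j.1 ∈ P1 => hh.2 j.2)
      rw [hfun, Matrix.mulVec_zero]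
    have hχ0 : ∀ j ∈ I.χ i.1, x j = 0 := by
      intro j hj
      by_cases hjP : j ∈ P1
      · rw [show x j = z ⟨j, hjP⟩ from dif_pos hjP]
        exact hzχ ⟨j, hjP⟩ hj
      · exact dif_neg hjP
    have := hind i.1 x hy1 hy2 hχ0
    rwa [show x (I.f i.1) = z ⟨I.f i.1, i.2⟩ from dif_pos i.2] at this
  let φB : (↥P12 → K) →ₗ[K] (Fin l2 → K) × ((Fin l1 → K) ⧸ VA) :=
    (C'.mulVecLin).prod (VA.mkQ.comp B'.mulVecLin)
  have hB : I.mrk K P12 ≤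
      Module.finrank K ((Fin l2 → K) × ((Fin l1 → K) ⧸ VA)) := by
    refine mrk_le_finrank I P12 φB (fun i z hz hzχ => ?_)
    have hCz : C'.mulVec z = 0 := congrArg Prod.fst hz
    have hBz : B'.mulVec z ∈ VA := by
      have h2 : VA.mkQ (B'.mulVec z) = 0 := congrArg Prod.snd hz
      rwa [Submodule.mkQ_apply, Submodule.Quotient.mk_eq_zero] at h2
    obtain ⟨w, hw⟩ := hBz
    set x : Fin m → K := fun p =>
      if h : p ∈ P12 then z ⟨p, h⟩ else if h : p ∈ P1 then -(w ⟨p, h⟩) else 0 with hxdef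
    have hxP12 : ∀ p (h : p ∈ P12), x p = z ⟨p, h⟩ := fun p h => dif_pos h
    have hxP1 : ∀ p (h : p ∈ P1), x p = -(w ⟨p, h⟩) := by
      intro p h
      rw [hxdef]
      simp only
      rw [dif_neg (fun hh : p ∈ P12 => h.2 hh.2), dif_pos h]
    have hx0 : ∀ p, p ∉ P12 → p ∉ P1 → x p = 0 := by
      intro p h12 h1
      rw [hxdef]
      simp only
      rw [dif_neg h12, dif_neg h1]
    have hy1 : (G1.mulVec fun j => x j.1) = 0 := by
      funext a
      rw [hmv1 x a]
      simp only [Pi.zero_apply]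
      calc (∑ p, if h : p ∈ I.M1 then G1 a ⟨p, h⟩ * x p else 0)
          = ∑ p, ((if h : p ∈ P12 then B' a ⟨p, h⟩ * z ⟨p, h⟩ else 0) +
              (if h : p ∈ P1 then A' a ⟨p, h⟩ * (-(w ⟨p, h⟩)) else 0)) := by
            refine Finset.sum_congr rfl fun p _ => ?_
            by_cases h1 : p ∈ I.M1
            · by_cases h2 : p ∈ I.M2
              · have hp12 : p ∈ P12 := ⟨h1, h2⟩
                have hp1 : p ∉ P1 := fun hh => hh.2 h2
                rw [dif_pos h1, dif_pos hp12, dif_neg hp1, hxP12 p hp12, add_zero]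
              · have hp12 : p ∉ P12 := fun hh => h2 hh.2
                have hp1 : p ∈ P1 := ⟨h1, h2⟩
                rw [dif_pos h1, dif_neg hp12, dif_pos hp1, hxP1 p hp1, zero_add]
            · have hp12 : p ∉ P12 := fun hh => h1 hh.1
              have hp1 : p ∉ P1 := fun hh => h1 hh.1
              rw [dif_neg h1, dif_neg hp12, dif_neg hp1, add_zero]
        _ = (∑ p, if h : p ∈ P12 then B' a ⟨p, h⟩ * z ⟨p, h⟩ else 0) +
            (∑ p, if h : p ∈ P1 then A' a ⟨p, h⟩ * (-(w ⟨p, h⟩)) else 0) :=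
            Finset.sum_add_distrib
        _ = (∑ j : ↥P12, B' a j * z j) + (∑ j : ↥P1, A' a j * (-(w j))) := by
            rw [sum_dite_subtype P12 (fun j => B' a j * z j),
              sum_dite_subtype P1 (fun j => A' a j * (-(w j)))]
        _ = B'.mulVec z a + -(A'.mulVec w a) := by
            congr 1
            simp [Matrix.mulVec, dotProduct, mul_neg]
        _ = 0 := by
            have hw' : A'.mulVec w = B'.mulVec z := by
              rw [← Matrix.mulVecLin_apply, hw]
            rw [hw']
            exact add_neg_cancel _
    have hy2 : (G2.mulVec fun j => x j.1) = 0 := by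
      funext b
      rw [hmv2 x b]
      simp only [Pi.zero_apply]
      calc (∑ p, if h : p ∈ I.M2 then G2 b ⟨p, h⟩ * x p else 0)
          = ∑ p, (if h : p ∈ P12 then C' b ⟨p, h⟩ * z ⟨p, h⟩ else 0) := by
            refine Finset.sum_congr rfl fun p _ => ?_
            by_cases h2 : p ∈ I.M2
            · by_cases h1 : p ∈ I.M1
              · have hp12 : p ∈ P12 := ⟨h1, h2⟩
                rw [dif_pos h2, dif_pos hp12, hxP12 p hp12]
              · have hp12 : p ∉ P12 := fun hh => h1 hh.1
                have hp1 : p ∉ P1 := fun hh => h1 hh.1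
                rw [dif_pos h2, dif_neg hp12, hx0 p hp12 hp1, mul_zero]
            · rw [dif_neg h2, dif_neg (fun hh : p ∈ P12 => h2 hh.2)]
        _ = ∑ j : ↥P12, C' b j * z j := sum_dite_subtype P12 (fun j => C' b j * z j)
        _ = 0 := congrFun hCz b
    have hχ0 : ∀ j ∈ I.χ i.1, x j = 0 := by
      intro j hj
      by_cases hj12 : j ∈ P12
      · rw [hxP12 j hj12]
        exact hzχ ⟨j, hj12⟩ hj
      · exact hx0 j hj12 (he i.1 i.2 j hj)
    have := hind i.1 x hy1 hy2 hχ0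
    rwa [show x (I.f i.1) = z ⟨I.f i.1, i.2⟩ from hxP12 _ i.2] at this
  have harith : Module.finrank K ((Fin l2 → K) × ((Fin l1 → K) ⧸ VA)) =
      l2 + Module.finrank K ((Fin l1 → K) ⧸ VA) := by
    rw [Module.finrank_prod, Module.finrank_fin_fun]
  have hq : Module.finrank K ((Fin l1 → K) ⧸ VA) + Module.finrank K ↥VA = l1 := by
    rw [Submodule.finrank_quotient_add_finrank, Module.finrank_fin_fun]
  omega

lemma achieve {K : Type*} [Field K] {m n : ℕ} (I : TGICP m n)
    (r1 r2 r12 : ℕ) (hord1 : r2 ≤ r12) (hord2 : r12 ≤ r1)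
    {n1 m1 n2 m2 n12 m12 : ℕ}
    (eR1 : Fin n1 ≃ {i : Fin n // I.f i ∈ I.M1 \ I.M2}) (eM1 : Fin m1 ≃ ↥(I.M1 \ I.M2))
    (eR2 : Fin n2 ≃ {i : Fin n // I.f i ∈ I.M2 \ I.M1}) (eM2 : Fin m2 ≃ ↥(I.M2 \ I.M1))
    (eR12 : Fin n12 ≃ {i : Fin n // I.f i ∈ I.M1 ∩ I.M2})
    (eM12 : Fin m12 ≃ ↥(I.M1 ∩ I.M2))
    (F1 : Matrix (Fin n1) (Fin m1) K) (F2 : Matrix (Fin n2) (Fin m2) K)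
    (F12 : Matrix (Fin n12) (Fin m12) K)
    (hF1 : SubCompletes I (I.M1 \ I.M2) eR1 eM1 F1)
    (hF2 : SubCompletes I (I.M2 \ I.M1) eR2 eM2 F2)
    (hF12 : SubCompletes I (I.M1 ∩ I.M2) eR12 eM12 F12)
    (hn1 : r1 ≤ n1) (hn2 : r2 ≤ n2) (hn12 : r12 ≤ n12)
    (P1m : Matrix (Fin n1) (Fin r1) K) (P2m : Matrix (Fin n2) (Fin r2) K)
    (P12m : Matrix (Fin n12) (Fin r12) K)
    (hP1 : ∀ k : Fin n1, r1 ≤ (k : ℕ) →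
      ∀ c, F1 k c = ∑ t, P1m k t * F1 (Fin.castLE hn1 t) c)
    (hP2 : ∀ k : Fin n2, r2 ≤ (k : ℕ) →
      ∀ c, F2 k c = ∑ t, P2m k t * F2 (Fin.castLE hn2 t) c)
    (hP12 : ∀ k : Fin n12, r12 ≤ (k : ℕ) →
      ∀ c, F12 k c = ∑ t, P12m k t * F12 (Fin.castLE hn12 t) c)
    (hJE2 : ∀ (k : Fin n2) (c : Fin m1), (eM1 c).1 ∉ I.χ (eR2 k).1 →
      stacked P2m (padFirst r2 r1 hn1 F1) k c = 0)
    (hc : ∀ (k : Fin n1) (c : Fin m12), (eM12 c).1 ∉ I.χ (eR1 k).1 →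
      stacked P1m (padFirst r1 r12 hn12 F12) k c = 0)
    (hd : ∀ (k : Fin n12) (c : Fin m2), (eM2 c).1 ∉ I.χ (eR12 k).1 →
      stacked P12m (padFirst r12 r2 hn2 F2) k c = 0) :
    ∃ (G1 : Matrix (Fin r1) ↥I.M1 K) (G2 : Matrix (Fin r12) ↥I.M2 K),
      I.IsCode K G1 G2 := by
  classical
  set row1 : Fin r1 → Fin m → K := fun a p =>
    if h12 : p ∈ I.M1 ∩ I.M2 then padFirst r1 r12 hn12 F12 a (eM12.symm ⟨p, h12⟩)
    else if h1 : p ∈ I.M1 \ I.M2 then F1 (Fin.castLE hn1 a) (eM1.symm ⟨p, h1⟩) else 0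
    with hrow1
  set row2 : Fin r12 → Fin m → K := fun b p =>
    if h12 : p ∈ I.M1 ∩ I.M2 then F12 (Fin.castLE hn12 b) (eM12.symm ⟨p, h12⟩)
    else if h2 : p ∈ I.M2 \ I.M1 then padFirst r12 r2 hn2 F2 b (eM2.symm ⟨p, h2⟩) else 0
    with hrow2
  refine ⟨fun a j => row1 a j.1, fun b j => row2 b j.1, ?_⟩
  set G1c : Matrix (Fin r1) ↥I.M1 K := fun a j => row1 a j.1 with hG1c
  set G2c : Matrix (Fin r12) ↥I.M2 K := fun b j => row2 b j.1 with hG2c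
  -- row1 vanishes off M1, row2 vanishes off M2
  have hrow1_0 : ∀ a p, p ∉ I.M1 → row1 a p = 0 := by
    intro a p hp
    rw [hrow1]
    simp only
    rw [dif_neg (fun hh : p ∈ I.M1 ∩ I.M2 => hp hh.1),
      dif_neg (fun hh : p ∈ I.M1 \ I.M2 => hp hh.1)]
  have hrow2_0 : ∀ b p, p ∉ I.M2 → row2 b p = 0 := by
    intro b p hp
    rw [hrow2]
    simp only
    rw [dif_neg (fun hh : p ∈ I.M1 ∩ I.M2 => hp hh.2),
      dif_neg (fun hh : p ∈ I.M2 \ I.M1 => hp hh.1)]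
  have key1 : ∀ (x : Fin m → K) a, (G1c.mulVec fun j => x j.1) a = ∑ p, row1 a p * x p := by
    intro x a
    rw [show (G1c.mulVec fun j => x j.1) a = ∑ j : ↥I.M1, row1 a j.1 * x j.1 from rfl]
    exact sum_subtype_eq_sum_ambient I.M1 (fun p => row1 a p * x p)
      (fun p hp => by show row1 a p * x p = 0; rw [hrow1_0 a p hp, zero_mul])
  have key2 : ∀ (x : Fin m → K) b, (G2c.mulVec fun j => x j.1) b = ∑ p, row2 b p * x p := by
    intro x b
    rw [show (G2c.mulVec fun j => x j.1) b = ∑ j : ↥I.M2, row2 b j.1 * x j.1 from rfl]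
    exact sum_subtype_eq_sum_ambient I.M2 (fun p => row2 b p * x p)
      (fun p hp => by show row2 b p * x p = 0; rw [hrow2_0 b p hp, zero_mul])
  intro i
  by_cases h1 : I.f i ∈ I.M1 <;> by_cases h2 : I.f i ∈ I.M2
  · -- f i ∈ P12 : decode from y2
    set k : Fin n12 := eR12.symm ⟨i, ⟨h1, h2⟩⟩ with hk
    have hkk : eR12 k = ⟨i, ⟨h1, h2⟩⟩ := eR12.apply_symm_apply _
    set coef : Fin m → K := fun p =>
      if h : (k : ℕ) < r12 then row2 ⟨k.1, h⟩ p else ∑ t, P12m k t * row2 t p with hcoef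
    refine ⟨fun _ y2 s =>
      (if h : (k : ℕ) < r12 then y2 ⟨k.1, h⟩ else ∑ t, P12m k t * y2 t) -
        ∑ j : ↥(I.χ i), coef j.1 * s j, fun x => ?_⟩
    have hu : (if h : (k : ℕ) < r12 then (G2c.mulVec fun j => x j.1) ⟨k.1, h⟩
        else ∑ t, P12m k t * (G2c.mulVec fun j => x j.1) t) = ∑ p, coef p * x p := by
      by_cases h : (k : ℕ) < r12
      · rw [dif_pos h, key2]
        exact Finset.sum_congr rfl fun p _ => by
          rw [show coef p = row2 ⟨k.1, h⟩ p from dif_pos h]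
      · rw [dif_neg h]
        calc ∑ t, P12m k t * (G2c.mulVec fun j => x j.1) t
            = ∑ t, ∑ p, P12m k t * (row2 t p * x p) := by
              refine Finset.sum_congr rfl fun t _ => ?_
              rw [key2 x t, Finset.mul_sum]
          _ = ∑ p, (∑ t, P12m k t * row2 t p) * x p := by
              rw [Finset.sum_comm]
              refine Finset.sum_congr rfl fun p _ => ?_
              rw [Finset.sum_mul]
              exact Finset.sum_congr rfl fun t _ => (mul_assoc _ _ _).symm
          _ = ∑ p, coef p * x p := Finset.sum_congr rfl fun p _ => by
              rw [show coef p = ∑ t, P12m k t * row2 t p from dif_neg h]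
    have hcoefP12 : ∀ p (hp : p ∈ I.M1 ∩ I.M2), coef p = F12 k (eM12.symm ⟨p, hp⟩) := by
      intro p hp
      by_cases h : (k : ℕ) < r12
      · rw [show coef p = row2 ⟨k.1, h⟩ p from dif_pos h, hrow2]
        simp only
        rw [dif_pos hp]
        congr 1
      · rw [show coef p = ∑ t, P12m k t * row2 t p from dif_neg h]
        rw [show (∑ t, P12m k t * row2 t p) =
            ∑ t, P12m k t * F12 (Fin.castLE hn12 t) (eM12.symm ⟨p, hp⟩) from
          Finset.sum_congr rfl fun t _ => by
            rw [hrow2]; simp only; rw [dif_pos hp]]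
        exact (hP12 k (le_of_not_gt h) _).symm
    have hcoefP2 : ∀ p (hp : p ∈ I.M2 \ I.M1), coef p =
        stacked P12m (padFirst r12 r2 hn2 F2) k (eM2.symm ⟨p, hp⟩) := by
      intro p hp
      have hnp12 : p ∉ I.M1 ∩ I.M2 := fun hh => hp.2 hh.1
      by_cases h : (k : ℕ) < r12
      · rw [show coef p = row2 ⟨k.1, h⟩ p from dif_pos h, hrow2]
        simp only
        rw [dif_neg hnp12, dif_pos hp]
        exact (show stacked P12m (padFirst r12 r2 hn2 F2) k (eM2.symm ⟨p, hp⟩) =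
          padFirst r12 r2 hn2 F2 ⟨k.1, h⟩ (eM2.symm ⟨p, hp⟩) from dif_pos h).symm
      · rw [show coef p = ∑ t, P12m k t * row2 t p from dif_neg h]
        rw [show (∑ t, P12m k t * row2 t p) =
            ∑ t, P12m k t * padFirst r12 r2 hn2 F2 t (eM2.symm ⟨p, hp⟩) from
          Finset.sum_congr rfl fun t _ => by
            rw [hrow2]; simp only; rw [dif_neg hnp12, dif_pos hp]]
        exact (show stacked P12m (padFirst r12 r2 hn2 F2) k (eM2.symm ⟨p, hp⟩) =
          ∑ t, P12m k t * padFirst r12 r2 hn2 F2 t (eM2.symm ⟨p, hp⟩) from dif_neg h).symm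
    have hcoef0 : ∀ p, p ∉ I.M1 ∩ I.M2 → p ∉ I.M2 \ I.M1 → coef p = 0 := by
      intro p hp12 hp2
      have hr0 : ∀ b : Fin r12, row2 b p = 0 := by
        intro b
        rw [hrow2]
        simp only
        rw [dif_neg hp12, dif_neg hp2]
      by_cases h : (k : ℕ) < r12
      · rw [show coef p = row2 ⟨k.1, h⟩ p from dif_pos h, hr0]
      · rw [show coef p = ∑ t, P12m k t * row2 t p from dif_neg h]
        exact Finset.sum_eq_zero fun t _ => by rw [hr0, mul_zero]
    have hcoef_f : coef (I.f i) = 1 := by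
      rw [hcoefP12 _ ⟨h1, h2⟩]
      refine (hF12 k (eM12.symm ⟨I.f i, ⟨h1, h2⟩⟩)).1 ?_
      rw [hkk, Equiv.apply_symm_apply]
    have hcoef_van : ∀ p, p ≠ I.f i → p ∉ I.χ i → coef p = 0 := by
      intro p hne hns
      by_cases hp12 : p ∈ I.M1 ∩ I.M2
      · rw [hcoefP12 p hp12]
        refine (hF12 k (eM12.symm ⟨p, hp12⟩)).2 ?_ ?_ <;>
          rw [hkk, Equiv.apply_symm_apply] <;> [exact hne; exact hns]
      · by_cases hp2 : p ∈ I.M2 \ I.M1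
        · rw [hcoefP2 p hp2]
          refine hd k (eM2.symm ⟨p, hp2⟩) ?_
          rw [hkk, Equiv.apply_symm_apply]
          exact hns
        · exact hcoef0 p hp12 hp2
    have hfinal : (if h : (k : ℕ) < r12 then (G2c.mulVec fun j => x j.1) ⟨k.1, h⟩
        else ∑ t, P12m k t * (G2c.mulVec fun j => x j.1) t) -
        (∑ j : ↥(I.χ i), coef j.1 * x j.1) = x (I.f i) := by
      rw [hu]
      exact decode_final (I.χ i) (I.f i) (I.not_mem i) coef x hcoef_f hcoef_van
    exact hfinal
  · -- f i ∈ P1 : decode from y1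
    set k : Fin n1 := eR1.symm ⟨i, ⟨h1, h2⟩⟩ with hk
    have hkk : eR1 k = ⟨i, ⟨h1, h2⟩⟩ := eR1.apply_symm_apply _
    set coef : Fin m → K := fun p =>
      if h : (k : ℕ) < r1 then row1 ⟨k.1, h⟩ p else ∑ t, P1m k t * row1 t p with hcoef
    refine ⟨fun y1 _ s =>
      (if h : (k : ℕ) < r1 then y1 ⟨k.1, h⟩ else ∑ t, P1m k t * y1 t) -
        ∑ j : ↥(I.χ i), coef j.1 * s j, fun x => ?_⟩
    have hu : (if h : (k : ℕ) < r1 then (G1c.mulVec fun j => x j.1) ⟨k.1, h⟩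
        else ∑ t, P1m k t * (G1c.mulVec fun j => x j.1) t) = ∑ p, coef p * x p := by
      by_cases h : (k : ℕ) < r1
      · rw [dif_pos h, key1]
        exact Finset.sum_congr rfl fun p _ => by
          rw [show coef p = row1 ⟨k.1, h⟩ p from dif_pos h]
      · rw [dif_neg h]
        calc ∑ t, P1m k t * (G1c.mulVec fun j => x j.1) t
            = ∑ t, ∑ p, P1m k t * (row1 t p * x p) := by
              refine Finset.sum_congr rfl fun t _ => ?_
              rw [key1 x t, Finset.mul_sum]
          _ = ∑ p, (∑ t, P1m k t * row1 t p) * x p := by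
              rw [Finset.sum_comm]
              refine Finset.sum_congr rfl fun p _ => ?_
              rw [Finset.sum_mul]
              exact Finset.sum_congr rfl fun t _ => (mul_assoc _ _ _).symm
          _ = ∑ p, coef p * x p := Finset.sum_congr rfl fun p _ => by
              rw [show coef p = ∑ t, P1m k t * row1 t p from dif_neg h]
    have hcoefP1 : ∀ p (hp : p ∈ I.M1 \ I.M2), coef p = F1 k (eM1.symm ⟨p, hp⟩) := by
      intro p hp
      have hnp12 : p ∉ I.M1 ∩ I.M2 := fun hh => hp.2 hh.2
      by_cases h : (k : ℕ) < r1
      · rw [show coef p = row1 ⟨k.1, h⟩ p from dif_pos h, hrow1]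
        simp only
        rw [dif_neg hnp12, dif_pos hp]
        congr 1
      · rw [show coef p = ∑ t, P1m k t * row1 t p from dif_neg h]
        rw [show (∑ t, P1m k t * row1 t p) =
            ∑ t, P1m k t * F1 (Fin.castLE hn1 t) (eM1.symm ⟨p, hp⟩) from
          Finset.sum_congr rfl fun t _ => by
            rw [hrow1]; simp only; rw [dif_neg hnp12, dif_pos hp]]
        exact (hP1 k (le_of_not_gt h) _).symm
    have hcoefP12 : ∀ p (hp : p ∈ I.M1 ∩ I.M2), coef p =
        stacked P1m (padFirst r1 r12 hn12 F12) k (eM12.symm ⟨p, hp⟩) := by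
      intro p hp
      by_cases h : (k : ℕ) < r1
      · rw [show coef p = row1 ⟨k.1, h⟩ p from dif_pos h, hrow1]
        simp only
        rw [dif_pos hp]
        exact (show stacked P1m (padFirst r1 r12 hn12 F12) k (eM12.symm ⟨p, hp⟩) =
          padFirst r1 r12 hn12 F12 ⟨k.1, h⟩ (eM12.symm ⟨p, hp⟩) from dif_pos h).symm
      · rw [show coef p = ∑ t, P1m k t * row1 t p from dif_neg h]
        rw [show (∑ t, P1m k t * row1 t p) =
            ∑ t, P1m k t * padFirst r1 r12 hn12 F12 t (eM12.symm ⟨p, hp⟩) from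
          Finset.sum_congr rfl fun t _ => by
            rw [hrow1]; simp only; rw [dif_pos hp]]
        exact (show stacked P1m (padFirst r1 r12 hn12 F12) k (eM12.symm ⟨p, hp⟩) =
          ∑ t, P1m k t * padFirst r1 r12 hn12 F12 t (eM12.symm ⟨p, hp⟩) from dif_neg h).symm
    have hcoef0 : ∀ p, p ∉ I.M1 → coef p = 0 := by
      intro p hp
      by_cases h : (k : ℕ) < r1
      · rw [show coef p = row1 ⟨k.1, h⟩ p from dif_pos h, hrow1_0]
        exact hp
      · rw [show coef p = ∑ t, P1m k t * row1 t p from dif_neg h]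
        exact Finset.sum_eq_zero fun t _ => by rw [hrow1_0 t p hp, mul_zero]
    have hcoef_f : coef (I.f i) = 1 := by
      rw [hcoefP1 _ ⟨h1, h2⟩]
      refine (hF1 k (eM1.symm ⟨I.f i, ⟨h1, h2⟩⟩)).1 ?_
      rw [hkk, Equiv.apply_symm_apply]
    have hcoef_van : ∀ p, p ≠ I.f i → p ∉ I.χ i → coef p = 0 := by
      intro p hne hns
      by_cases hp12 : p ∈ I.M1 ∩ I.M2
      · rw [hcoefP12 p hp12]
        refine hc k (eM12.symm ⟨p, hp12⟩) ?_
        rw [hkk, Equiv.apply_symm_apply]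
        exact hns
      · by_cases hp1 : p ∈ I.M1 \ I.M2
        · rw [hcoefP1 p hp1]
          refine (hF1 k (eM1.symm ⟨p, hp1⟩)).2 ?_ ?_ <;>
            rw [hkk, Equiv.apply_symm_apply] <;> [exact hne; exact hns]
        · refine hcoef0 p (fun hh => ?_)
          by_cases hm2 : p ∈ I.M2
          · exact hp12 ⟨hh, hm2⟩
          · exact hp1 ⟨hh, hm2⟩
    have hfinal : (if h : (k : ℕ) < r1 then (G1c.mulVec fun j => x j.1) ⟨k.1, h⟩
        else ∑ t, P1m k t * (G1c.mulVec fun j => x j.1) t) -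
        (∑ j : ↥(I.χ i), coef j.1 * x j.1) = x (I.f i) := by
      rw [hu]
      exact decode_final (I.χ i) (I.f i) (I.not_mem i) coef x hcoef_f hcoef_van
    exact hfinal
  · -- f i ∈ P2 : decode from y2 - y1
    set k : Fin n2 := eR2.symm ⟨i, ⟨h2, h1⟩⟩ with hk
    have hkk : eR2 k = ⟨i, ⟨h2, h1⟩⟩ := eR2.apply_symm_apply _
    set e2 : Fin r2 → Fin r12 := fun t => ⟨t.1, lt_of_lt_of_le t.isLt hord1⟩ with he2
    set e1 : Fin r2 → Fin r1 := fun t => ⟨t.1, lt_of_lt_of_le t.isLt (le_trans hord1 hord2)⟩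
      with he1
    set coef : Fin m → K := fun p =>
      if h : (k : ℕ) < r2 then row2 (e2 ⟨k.1, h⟩) p - row1 (e1 ⟨k.1, h⟩) p
      else ∑ t, P2m k t * (row2 (e2 t) p - row1 (e1 t) p) with hcoef
    refine ⟨fun y1 y2 s =>
      (if h : (k : ℕ) < r2 then y2 (e2 ⟨k.1, h⟩) - y1 (e1 ⟨k.1, h⟩)
        else ∑ t, P2m k t * (y2 (e2 t) - y1 (e1 t))) -
        ∑ j : ↥(I.χ i), coef j.1 * s j, fun x => ?_⟩
    have keyd : ∀ (t : Fin r2),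
        (G2c.mulVec fun j => x j.1) (e2 t) - (G1c.mulVec fun j => x j.1) (e1 t) =
        ∑ p, (row2 (e2 t) p - row1 (e1 t) p) * x p := by
      intro t
      rw [key1, key2, ← Finset.sum_sub_distrib]
      exact Finset.sum_congr rfl fun p _ => (sub_mul _ _ _).symm
    have hu : (if h : (k : ℕ) < r2 then
          (G2c.mulVec fun j => x j.1) (e2 ⟨k.1, h⟩) - (G1c.mulVec fun j => x j.1) (e1 ⟨k.1, h⟩)
        else ∑ t, P2m k t *
          ((G2c.mulVec fun j => x j.1) (e2 t) - (G1c.mulVec fun j => x j.1) (e1 t))) =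
        ∑ p, coef p * x p := by
      by_cases h : (k : ℕ) < r2
      · rw [dif_pos h, keyd]
        exact Finset.sum_congr rfl fun p _ => by
          rw [show coef p = row2 (e2 ⟨k.1, h⟩) p - row1 (e1 ⟨k.1, h⟩) p from dif_pos h]
      · rw [dif_neg h]
        calc ∑ t, P2m k t *
              ((G2c.mulVec fun j => x j.1) (e2 t) - (G1c.mulVec fun j => x j.1) (e1 t))
            = ∑ t, ∑ p, P2m k t * ((row2 (e2 t) p - row1 (e1 t) p) * x p) := by
              refine Finset.sum_congr rfl fun t _ => ?_
              rw [keyd t, Finset.mul_sum]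
          _ = ∑ p, (∑ t, P2m k t * (row2 (e2 t) p - row1 (e1 t) p)) * x p := by
              rw [Finset.sum_comm]
              refine Finset.sum_congr rfl fun p _ => ?_
              rw [Finset.sum_mul]
              exact Finset.sum_congr rfl fun t _ => (mul_assoc _ _ _).symm
          _ = ∑ p, coef p * x p := Finset.sum_congr rfl fun p _ => by
              rw [show coef p = ∑ t, P2m k t * (row2 (e2 t) p - row1 (e1 t) p) from dif_neg h]
    -- difference of rows
    have hdP12 : ∀ (t : Fin r2) p (hp : p ∈ I.M1 ∩ I.M2),
        row2 (e2 t) p - row1 (e1 t) p = 0 := by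
      intro t p hp
      rw [hrow1, hrow2]
      simp only
      rw [dif_pos hp, dif_pos hp]
      rw [show padFirst r1 r12 hn12 F12 (e1 t) (eM12.symm ⟨p, hp⟩) =
          F12 ⟨(e1 t).1, lt_of_lt_of_le (lt_of_lt_of_le t.isLt hord1) hn12⟩ (eM12.symm ⟨p, hp⟩)
        from dif_pos (lt_of_lt_of_le t.isLt hord1)]
      rw [show Fin.castLE hn12 (e2 t) =
          (⟨(e1 t).1, lt_of_lt_of_le (lt_of_lt_of_le t.isLt hord1) hn12⟩ : Fin n12) from
        Fin.ext rfl]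
      exact sub_self _
    have hdP1 : ∀ (t : Fin r2) p (hp : p ∈ I.M1 \ I.M2),
        row2 (e2 t) p - row1 (e1 t) p =
          -(padFirst r2 r1 hn1 F1 t (eM1.symm ⟨p, hp⟩)) := by
      intro t p hp
      have hnp12 : p ∉ I.M1 ∩ I.M2 := fun hh => hp.2 hh.2
      have hnp2 : p ∉ I.M2 \ I.M1 := fun hh => hp.2 hh.1
      rw [hrow1, hrow2]
      simp only
      rw [dif_neg hnp12, dif_neg hnp12, dif_neg hnp2, dif_pos hp, zero_sub]
      rw [show padFirst r2 r1 hn1 F1 t (eM1.symm ⟨p, hp⟩) =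
          F1 ⟨t.1, lt_of_lt_of_le t.isLt (le_trans (le_trans hord1 hord2) hn1)⟩
            (eM1.symm ⟨p, hp⟩) from
        dif_pos (lt_of_lt_of_le t.isLt (le_trans hord1 hord2))]
      congr 2
    have hdP2 : ∀ (t : Fin r2) p (hp : p ∈ I.M2 \ I.M1),
        row2 (e2 t) p - row1 (e1 t) p = F2 (Fin.castLE hn2 t) (eM2.symm ⟨p, hp⟩) := by
      intro t p hp
      have hnp12 : p ∉ I.M1 ∩ I.M2 := fun hh => hp.2 hh.1
      have hnp1 : p ∉ I.M1 \ I.M2 := fun hh => hp.2 hh.1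
      rw [hrow1, hrow2]
      simp only
      rw [dif_neg hnp12, dif_neg hnp12, dif_pos hp, dif_neg hnp1, sub_zero]
      rw [show padFirst r12 r2 hn2 F2 (e2 t) (eM2.symm ⟨p, hp⟩) =
          F2 ⟨(e2 t).1, lt_of_lt_of_le t.isLt hn2⟩ (eM2.symm ⟨p, hp⟩) from
        dif_pos t.isLt]
      congr 1
    have hd0 : ∀ (t : Fin r2) p, p ∉ I.M1 → p ∉ I.M2 →
        row2 (e2 t) p - row1 (e1 t) p = 0 := by
      intro t p hq1 hq2
      rw [hrow1_0 _ p hq1, hrow2_0 _ p hq2, sub_zero]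
    have hcoefP2 : ∀ p (hp : p ∈ I.M2 \ I.M1), coef p = F2 k (eM2.symm ⟨p, hp⟩) := by
      intro p hp
      by_cases h : (k : ℕ) < r2
      · rw [show coef p = row2 (e2 ⟨k.1, h⟩) p - row1 (e1 ⟨k.1, h⟩) p from dif_pos h,
          hdP2 ⟨k.1, h⟩ p hp]
        congr 1
      · rw [show coef p = ∑ t, P2m k t * (row2 (e2 t) p - row1 (e1 t) p) from dif_neg h]
        rw [Finset.sum_congr rfl fun t _ => by rw [hdP2 t p hp]]
        exact (hP2 k (le_of_not_gt h) _).symm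
    have hcoefP1 : ∀ p (hp : p ∈ I.M1 \ I.M2), coef p =
        -(stacked P2m (padFirst r2 r1 hn1 F1) k (eM1.symm ⟨p, hp⟩)) := by
      intro p hp
      by_cases h : (k : ℕ) < r2
      · rw [show coef p = row2 (e2 ⟨k.1, h⟩) p - row1 (e1 ⟨k.1, h⟩) p from dif_pos h,
          hdP1 ⟨k.1, h⟩ p hp]
        rw [show stacked P2m (padFirst r2 r1 hn1 F1) k (eM1.symm ⟨p, hp⟩) =
            padFirst r2 r1 hn1 F1 ⟨k.1, h⟩ (eM1.symm ⟨p, hp⟩) from dif_pos h]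
      · rw [show coef p = ∑ t, P2m k t * (row2 (e2 t) p - row1 (e1 t) p) from dif_neg h]
        rw [Finset.sum_congr rfl fun t _ => by rw [hdP1 t p hp]]
        rw [show stacked P2m (padFirst r2 r1 hn1 F1) k (eM1.symm ⟨p, hp⟩) =
            ∑ t, P2m k t * padFirst r2 r1 hn1 F1 t (eM1.symm ⟨p, hp⟩) from dif_neg h]
        rw [← Finset.sum_neg_distrib]
        exact Finset.sum_congr rfl fun t _ => by rw [mul_neg]
    have hcoef0 : ∀ p, p ∉ I.M2 \ I.M1 → p ∉ I.M1 → coef p = 0 := by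
      intro p hp2 hp1
      have hq2 : p ∉ I.M2 := fun hh => hp2 ⟨hh, hp1⟩
      have hz : ∀ t : Fin r2, row2 (e2 t) p - row1 (e1 t) p = 0 :=
        fun t => hd0 t p hp1 hq2
      by_cases h : (k : ℕ) < r2
      · rw [show coef p = row2 (e2 ⟨k.1, h⟩) p - row1 (e1 ⟨k.1, h⟩) p from dif_pos h, hz]
      · rw [show coef p = ∑ t, P2m k t * (row2 (e2 t) p - row1 (e1 t) p) from dif_neg h]
        exact Finset.sum_eq_zero fun t _ => by rw [hz, mul_zero]
    have hcoefP12 : ∀ p, p ∈ I.M1 ∩ I.M2 → coef p = 0 := by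
      intro p hp
      have hz : ∀ t : Fin r2, row2 (e2 t) p - row1 (e1 t) p = 0 := fun t => hdP12 t p hp
      by_cases h : (k : ℕ) < r2
      · rw [show coef p = row2 (e2 ⟨k.1, h⟩) p - row1 (e1 ⟨k.1, h⟩) p from dif_pos h, hz]
      · rw [show coef p = ∑ t, P2m k t * (row2 (e2 t) p - row1 (e1 t) p) from dif_neg h]
        exact Finset.sum_eq_zero fun t _ => by rw [hz, mul_zero]
    have hcoef_f : coef (I.f i) = 1 := by
      rw [hcoefP2 _ ⟨h2, h1⟩]
      refine (hF2 k (eM2.symm ⟨I.f i, ⟨h2, h1⟩⟩)).1 ?_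
      rw [hkk, Equiv.apply_symm_apply]
    have hcoef_van : ∀ p, p ≠ I.f i → p ∉ I.χ i → coef p = 0 := by
      intro p hne hns
      by_cases hp12 : p ∈ I.M1 ∩ I.M2
      · exact hcoefP12 p hp12
      · by_cases hp1 : p ∈ I.M1 \ I.M2
        · rw [hcoefP1 p hp1]
          rw [hJE2 k (eM1.symm ⟨p, hp1⟩) (by rw [hkk, Equiv.apply_symm_apply]; exact hns)]
          exact neg_zero
        · by_cases hp2 : p ∈ I.M2 \ I.M1
          · rw [hcoefP2 p hp2]
            refine (hF2 k (eM2.symm ⟨p, hp2⟩)).2 ?_ ?_ <;>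
              rw [hkk, Equiv.apply_symm_apply] <;> [exact hne; exact hns]
          · refine hcoef0 p hp2 (fun hh => ?_)
            by_cases hm2 : p ∈ I.M2
            · exact hp12 ⟨hh, hm2⟩
            · exact hp1 ⟨hh, hm2⟩
    have hfinal : (if h : (k : ℕ) < r2 then
          (G2c.mulVec fun j => x j.1) (e2 ⟨k.1, h⟩) - (G1c.mulVec fun j => x j.1) (e1 ⟨k.1, h⟩)
        else ∑ t, P2m k t *
          ((G2c.mulVec fun j => x j.1) (e2 t) - (G1c.mulVec fun j => x j.1) (e1 t))) -
        (∑ j : ↥(I.χ i), coef j.1 * x j.1) = x (I.f i) := by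
      rw [hu]
      exact decode_final (I.χ i) (I.f i) (I.not_mem i) coef x hcoef_f hcoef_van
    exact hfinal
  · -- impossible : f i ∉ M1 ∪ M2
    exfalso
    have : I.f i ∈ I.M1 ∪ I.M2 := by rw [I.cover]; trivial
    rcases this with h | h
    · exact h1 h
    · exact h2 h

/-- Corollary, TUICP with interaction digraph `H_62`.
Let `I` be a two-sender unicast index coding problem (`I.f` bijective) with
`r_1 ≥ r_{12} ≥ r_2` (`r_A = mrk_A`).  Assume:
(a) completions `F1 ≈ F_x^(1)`, `F2 ≈ F_x^(2)` of ranks `r1, r2` realize `F̃_x` as a joint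
extension of the type of the joint-extension theorem (first rows span via `P1m`, `P2m`;
stacked matrices vanish at non-side-information entries: hyps `hJE1`, `hJE2`);
(b) a completion `F12 ≈ F_x^(12)` of rank `r12` has its first `r12` rows spanning its row
space, `P12m` expressing the remaining rows, and `P1m` expressing the last rows of `F1`;
(c) with `F̂^(12)` the first `r12` rows of `F12` padded to `r1` rows, `[F̂^(12) ; P1m·F̂^(12)]`
vanishes at every entry at which the corresponding receiver with demand in `P_1` does not
have the corresponding `P_{12}`-message in its side information;
(d) with `F̂^(2)` the first `r2` rows of `F2` padded to `r12` rows, `[F̂^(2) ; P12m·F̂^(2)]`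
vanishes at every entry at which the corresponding receiver with demand in `P_{12}` does
not have the corresponding `P_2`-message in its side information;
(e) no receiver with demand in `P_{12}` has side information in `P_1` (the interaction
`I_{12} → I_1` does not exist).
Then `l*_q(I) = r_1 + r_{12} = mrk_1 + mrk_{12}`. -/
theorem stmt19 (K : Type*) [Field K] [Fintype K] {m n : ℕ} (I : TGICP m n)
    (hunicast : Function.Bijective I.f)
    (r1 r2 r12 : ℕ)
    (hr1 : r1 = I.mrk K (I.M1 \ I.M2)) (hr2 : r2 = I.mrk K (I.M2 \ I.M1))
    (hr12 : r12 = I.mrk K (I.M1 ∩ I.M2))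
    (hord1 : r2 ≤ r12) (hord2 : r12 ≤ r1)
    (n1 m1 n2 m2 n12 m12 : ℕ)
    (eR1 : Fin n1 ≃ {i : Fin n // I.f i ∈ I.M1 \ I.M2}) (eM1 : Fin m1 ≃ ↥(I.M1 \ I.M2))
    (eR2 : Fin n2 ≃ {i : Fin n // I.f i ∈ I.M2 \ I.M1}) (eM2 : Fin m2 ≃ ↥(I.M2 \ I.M1))
    (eR12 : Fin n12 ≃ {i : Fin n // I.f i ∈ I.M1 ∩ I.M2})
    (eM12 : Fin m12 ≃ ↥(I.M1 ∩ I.M2))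
    (F1 : Matrix (Fin n1) (Fin m1) K) (F2 : Matrix (Fin n2) (Fin m2) K)
    (F12 : Matrix (Fin n12) (Fin m12) K)
    (hF1 : SubCompletes I (I.M1 \ I.M2) eR1 eM1 F1)
    (hF2 : SubCompletes I (I.M2 \ I.M1) eR2 eM2 F2)
    (hF12 : SubCompletes I (I.M1 ∩ I.M2) eR12 eM12 F12)
    (hrk1 : F1.rank = r1) (hrk2 : F2.rank = r2) (hrk12 : F12.rank = r12)
    (hn1 : r1 ≤ n1) (hn2 : r2 ≤ n2) (hn12 : r12 ≤ n12)
    (P1m : Matrix (Fin n1) (Fin r1) K) (P2m : Matrix (Fin n2) (Fin r2) K)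
    (P12m : Matrix (Fin n12) (Fin r12) K)
    (hP1 : ∀ k : Fin n1, r1 ≤ (k : ℕ) →
      ∀ c, F1 k c = ∑ t, P1m k t * F1 (Fin.castLE hn1 t) c)
    (hP2 : ∀ k : Fin n2, r2 ≤ (k : ℕ) →
      ∀ c, F2 k c = ∑ t, P2m k t * F2 (Fin.castLE hn2 t) c)
    (hP12 : ∀ k : Fin n12, r12 ≤ (k : ℕ) →
      ∀ c, F12 k c = ∑ t, P12m k t * F12 (Fin.castLE hn12 t) c)
    (hJE1 : ∀ (k : Fin n1) (c : Fin m2), (eM2 c).1 ∉ I.χ (eR1 k).1 →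
      stacked P1m (padFirst r1 r2 hn2 F2) k c = 0)
    (hJE2 : ∀ (k : Fin n2) (c : Fin m1), (eM1 c).1 ∉ I.χ (eR2 k).1 →
      stacked P2m (padFirst r2 r1 hn1 F1) k c = 0)
    (hc : ∀ (k : Fin n1) (c : Fin m12), (eM12 c).1 ∉ I.χ (eR1 k).1 →
      stacked P1m (padFirst r1 r12 hn12 F12) k c = 0)
    (hd : ∀ (k : Fin n12) (c : Fin m2), (eM2 c).1 ∉ I.χ (eR12 k).1 →
      stacked P12m (padFirst r12 r2 hn2 F2) k c = 0)
    (he : ∀ i, I.f i ∈ I.M1 ∩ I.M2 → ∀ p ∈ I.χ i, p ∉ I.M1 \ I.M2) :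
    I.optLen K = r1 + r12 := by

  obtain ⟨G1c, G2c, hcode⟩ := achieve I r1 r2 r12 hord1 hord2 eR1 eM1 eR2 eM2 eR12 eM12
    F1 F2 F12 hF1 hF2 hF12 hn1 hn2 hn12 P1m P2m P12m hP1 hP2 hP12 hJE2 hc hd
  have hmem : r1 + r12 ∈ {L | ∃ (l1 l2 : ℕ) (G1 : Matrix (Fin l1) ↥I.M1 K)
      (G2 : Matrix (Fin l2) ↥I.M2 K), I.IsCode K G1 G2 ∧ L = l1 + l2} :=
    ⟨r1, r12, G1c, G2c, hcode, rfl⟩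
  refine le_antisymm (Nat.sInf_le hmem) ?_
  obtain ⟨l1, l2, G1', G2', hc', hL⟩ := Nat.sInf_mem (⟨_, hmem⟩ : Set.Nonempty _)
  have hb := converse_bound I he G1' G2' hc'
  rw [← hr1, ← hr12] at hb
  have hopt : I.optLen K = l1 + l2 := hL
  rw [hopt]
  exact hb
end
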